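/- arXiv:1301.1025 — 7 statements merged into one kernel-verified Lean document; each statement's English description precedes it below -/
import Mathlib

section
/- For every λ > 0, 1 ≤ q < ∞, and every nonnegative measurable function f on (0,∞), one has (∫₀^∞ (t^{-λ} ∫₀^t f(s) ds)^q dt/t)^{1/q} ≤ (1/λ) (∫₀^∞ (t^{1-λ} f(t))^q dt/t)^{1/q}. -/
/-!
Hölder's inequality against the weight `s ^ (λ - 1)`, whose integral over `(0, t)` is `t ^ λ / λ`,
gives `(∫₀ᵗ f) ^ q ≤ (t ^ λ / λ) ^ (q - 1) ∫₀ᵗ f(s) ^ q s ^ ((1 - λ)(q - 1)) ds`. Integrating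
this against `t ^ (-λq - 1) dt` and exchanging the order of integration, the tail integral
`∫ₛ^∞ t ^ (-λ - 1) dt = s ^ (-λ) / λ` turns the right-hand side into
`λ ^ (-q) ∫ (s ^ (1 - λ) f(s)) ^ q ds / s`.
-/

open MeasureTheory Set
open scoped ENNReal

lemma lintegral_Ioo_ofReal_rpow_sub_one {a t : ℝ} (ha : 0 < a) (ht : 0 < t) :
    ∫⁻ s in Ioo 0 t, ENNReal.ofReal s ^ (a - 1) =
      ENNReal.ofReal t ^ a * ENNReal.ofReal (1 / a) := by
  have hint : IntegrableOn (fun s : ℝ => s ^ (a - 1)) (Ioo 0 t) :=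
    (intervalIntegrable_iff_integrableOn_Ioo_of_le ht.le).1
      (intervalIntegral.intervalIntegrable_rpow' (by linarith))
  rw [setLIntegral_congr_fun measurableSet_Ioo fun s hs => ENNReal.ofReal_rpow_of_pos hs.1,
    ← ofReal_integral_eq_lintegral_ofReal hint
      (ae_restrict_of_forall_mem measurableSet_Ioo fun s hs => Real.rpow_nonneg hs.1.le _),
    ← integral_Ioc_eq_integral_Ioo, ← intervalIntegral.integral_of_le ht.le,
    integral_rpow (Or.inl (by linarith)), ENNReal.ofReal_rpow_of_pos ht,
    ← ENNReal.ofReal_mul (by positivity), Real.zero_rpow (by linarith), sub_zero, sub_add_cancel,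
    div_eq_mul_one_div]

lemma lintegral_Ioi_ofReal_rpow_neg_sub_one {a s : ℝ} (ha : 0 < a) (hs : 0 < s) :
    ∫⁻ t in Ioi s, ENNReal.ofReal t ^ (-a - 1) =
      ENNReal.ofReal s ^ (-a) * ENNReal.ofReal (1 / a) := by
  rw [setLIntegral_congr_fun measurableSet_Ioi fun t ht => ENNReal.ofReal_rpow_of_pos (hs.trans ht),
    ← ofReal_integral_eq_lintegral_ofReal (integrableOn_Ioi_rpow_of_lt (by linarith) hs)
      (ae_restrict_of_forall_mem measurableSet_Ioi fun t ht => Real.rpow_nonneg (hs.trans ht).le _),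
    integral_Ioi_rpow_of_lt (by linarith) hs, ENNReal.ofReal_rpow_of_pos hs,
    ← ENNReal.ofReal_mul (by positivity)]
  congr 1
  rw [show -a - 1 + 1 = -a by ring]
  field_simp

lemma lintegral_Ioi_mul_lintegral_Ioo_comm (a : ℝ) {F G : ℝ → ℝ≥0∞} (hF : Measurable F)
    (hG : Measurable G) :
    ∫⁻ t in Ioi a, G t * ∫⁻ s in Ioo a t, F s = ∫⁻ s in Ioi a, F s * ∫⁻ t in Ioi s, G t := by
  set K : ℝ → ℝ → ℝ≥0∞ := fun t s =>
    {p : ℝ × ℝ | p.2 < p.1}.indicator (fun p => G p.1 * F p.2) (t, s)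
  have hK : Measurable (Function.uncurry K) :=
    ((hG.comp measurable_fst).mul (hF.comp measurable_snd)).indicator
      (measurableSet_lt measurable_snd measurable_fst)
  have inner_s : ∀ t, G t * ∫⁻ s in Ioo a t, F s = ∫⁻ s in Ioi a, K t s := by
    intro t
    rw [← Ioi_inter_Iio, inter_comm, ← Measure.restrict_restrict measurableSet_Iio,
      ← lintegral_indicator measurableSet_Iio,
      ← lintegral_const_mul _ (hF.indicator measurableSet_Iio)]
    congr 1 with s
    by_cases hst : s < t <;> simp [K, hst]
  have inner_t : ∀ s ∈ Ioi a, ∫⁻ t in Ioi a, K t s = F s * ∫⁻ t in Ioi s, G t := by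
    intro s hs
    have hsub : Ioi s ∩ Ioi a = Ioi s := inter_eq_left.2 (Ioi_subset_Ioi (le_of_lt hs))
    rw [← hsub, ← Measure.restrict_restrict measurableSet_Ioi,
      ← lintegral_indicator (measurableSet_Ioi (a := s)),
      ← lintegral_const_mul _ (hG.indicator measurableSet_Ioi)]
    congr 1 with t
    by_cases hst : s < t <;> simp [K, hst, mul_comm]
  simp_rw [inner_s]
  rw [lintegral_lintegral_swap hK.aemeasurable]
  exact setLIntegral_congr_fun measurableSet_Ioi inner_t

lemma rpow_lintegral_Ioo_le {lam q t : ℝ} (hlam : 0 < lam) (hq : 1 ≤ q) {f : ℝ → ℝ≥0∞}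
    (hf : Measurable f) (ht : 0 < t) :
    (∫⁻ s in Ioo 0 t, f s) ^ q ≤ (ENNReal.ofReal t ^ lam * ENNReal.ofReal (1 / lam)) ^ (q - 1) *
      ∫⁻ s in Ioo 0 t, f s ^ q * ENNReal.ofReal s ^ ((1 - lam) * (q - 1)) := by
  have hq0 : 0 < q := by linarith
  set F : ℝ → ℝ≥0∞ := fun s => f s ^ q * ENNReal.ofReal s ^ ((1 - lam) * (q - 1))
  set W : ℝ → ℝ≥0∞ := fun s => ENNReal.ofReal s ^ (lam - 1)
  have hsplit : EqOn f (fun s => F s ^ (1 / q) * W s ^ ((q - 1) / q)) (Ioo 0 t) := by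
    intro s hs
    have h0 : ENNReal.ofReal s ≠ 0 := (ENNReal.ofReal_pos.2 hs.1).ne'
    have hexp : (1 - lam) * ((q - 1) * (1 / q)) + (lam - 1) * ((q - 1) / q) = 0 := by
      field_simp; ring
    simp only [F, W, ENNReal.mul_rpow_of_nonneg _ _ (one_div_nonneg.2 hq0.le), ← ENNReal.rpow_mul,
      mul_one_div_cancel hq0.ne', ENNReal.rpow_one, mul_assoc,
      ← ENNReal.rpow_add _ _ h0 ENNReal.ofReal_ne_top, hexp, ENNReal.rpow_zero, mul_one]
  have holder := ENNReal.lintegral_mul_norm_pow_le (μ := volume.restrict (Ioo 0 t))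
    (f := F) (g := W) (p := 1 / q) (q := (q - 1) / q) (by fun_prop) (by fun_prop) (by positivity)
    (div_nonneg (by linarith) hq0.le) (by field_simp; ring)
  calc (∫⁻ s in Ioo 0 t, f s) ^ q
      ≤ ((∫⁻ s in Ioo 0 t, F s) ^ (1 / q) * (∫⁻ s in Ioo 0 t, W s) ^ ((q - 1) / q)) ^ q := by
        rw [setLIntegral_congr_fun measurableSet_Ioo hsplit]
        exact ENNReal.rpow_le_rpow holder hq0.le
    _ = (∫⁻ s in Ioo 0 t, W s) ^ (q - 1) * ∫⁻ s in Ioo 0 t, F s := by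
        rw [ENNReal.mul_rpow_of_nonneg _ _ hq0.le, ← ENNReal.rpow_mul, ← ENNReal.rpow_mul,
          one_div_mul_cancel hq0.ne', div_mul_cancel₀ _ hq0.ne', ENNReal.rpow_one, mul_comm]
    _ = _ := by rw [lintegral_Ioo_ofReal_rpow_sub_one hlam ht]

lemma rpow_mul_lintegral_Ioo_div_le {lam q t : ℝ} (hlam : 0 < lam) (hq : 1 ≤ q) {f : ℝ → ℝ≥0∞}
    (hf : Measurable f) (ht : 0 < t) :
    (ENNReal.ofReal t ^ (-lam) * ∫⁻ s in Ioo 0 t, f s) ^ q / ENNReal.ofReal t ≤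
      ENNReal.ofReal (1 / lam) ^ (q - 1) * (ENNReal.ofReal t ^ (-lam - 1) *
        ∫⁻ s in Ioo 0 t, f s ^ q * ENNReal.ofReal s ^ ((1 - lam) * (q - 1))) := by
  have hq0 : 0 ≤ q := by linarith
  set T := ENNReal.ofReal t
  have hT0 : T ≠ 0 := (ENNReal.ofReal_pos.2 ht).ne'
  have hT : T ≠ ∞ := ENNReal.ofReal_ne_top
  calc (T ^ (-lam) * ∫⁻ s in Ioo 0 t, f s) ^ q / T
      = T ^ (-lam * q) * (∫⁻ s in Ioo 0 t, f s) ^ q * T ^ (-1 : ℝ) := by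
        rw [ENNReal.mul_rpow_of_nonneg _ _ hq0, ← ENNReal.rpow_mul, ENNReal.rpow_neg_one,
          div_eq_mul_inv]
    _ ≤ T ^ (-lam * q) * ((T ^ lam * ENNReal.ofReal (1 / lam)) ^ (q - 1) *
          ∫⁻ s in Ioo 0 t, f s ^ q * ENNReal.ofReal s ^ ((1 - lam) * (q - 1))) * T ^ (-1 : ℝ) := by
        gcongr
        exact rpow_lintegral_Ioo_le hlam hq hf ht
    _ = _ := by
        rw [ENNReal.mul_rpow_of_nonneg _ _ (by linarith), ← ENNReal.rpow_mul,
          show -lam - 1 = -lam * q + lam * (q - 1) + -1 by ring, ENNReal.rpow_add _ _ hT0 hT,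
          ENNReal.rpow_add _ _ hT0 hT]
        ring

lemma mul_lintegral_Ioi_ofReal_rpow {lam q s : ℝ} (hlam : 0 < lam) (hq : 0 ≤ q) (hs : 0 < s)
    (x : ℝ≥0∞) :
    x ^ q * ENNReal.ofReal s ^ ((1 - lam) * (q - 1)) *
        ∫⁻ t in Ioi s, ENNReal.ofReal t ^ (-lam - 1) =
      ENNReal.ofReal (1 / lam) * ((ENNReal.ofReal s ^ (1 - lam) * x) ^ q / ENNReal.ofReal s) := by
  set S := ENNReal.ofReal s
  have hS0 : S ≠ 0 := (ENNReal.ofReal_pos.2 hs).ne'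
  have hS : S ≠ ∞ := ENNReal.ofReal_ne_top
  have hrhs : (S ^ (1 - lam) * x) ^ q / S = x ^ q * S ^ ((1 - lam) * (q - 1)) * S ^ (-lam) := by
    rw [div_eq_mul_inv, ← ENNReal.rpow_neg_one, ENNReal.mul_rpow_of_nonneg _ _ hq,
      ← ENNReal.rpow_mul, mul_right_comm, ← ENNReal.rpow_add _ _ hS0 hS, mul_assoc,
      ← ENNReal.rpow_add _ _ hS0 hS, mul_comm]
    ring_nf
  rw [lintegral_Ioi_ofReal_rpow_neg_sub_one hlam hs, hrhs]
  ring

lemma lintegral_Ioi_rpow_mul_lintegral_Ioo_le {lam q : ℝ} (hlam : 0 < lam) (hq : 1 ≤ q)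
    {f : ℝ → ℝ≥0∞} (hf : Measurable f) :
    ∫⁻ t in Ioi 0, (ENNReal.ofReal t ^ (-lam) * ∫⁻ s in Ioo 0 t, f s) ^ q / ENNReal.ofReal t ≤
      ENNReal.ofReal (1 / lam) ^ q *
        ∫⁻ t in Ioi 0, (ENNReal.ofReal t ^ (1 - lam) * f t) ^ q / ENNReal.ofReal t := by
  set c := ENNReal.ofReal (1 / lam)
  have hc0 : c ≠ 0 := (ENNReal.ofReal_pos.2 (by positivity)).ne'
  have hc : c ≠ ∞ := ENNReal.ofReal_ne_top
  calc _ ≤ ∫⁻ t in Ioi 0, c ^ (q - 1) * (ENNReal.ofReal t ^ (-lam - 1) *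
          ∫⁻ s in Ioo 0 t, f s ^ q * ENNReal.ofReal s ^ ((1 - lam) * (q - 1))) :=
        setLIntegral_mono' measurableSet_Ioi fun t ht => rpow_mul_lintegral_Ioo_div_le hlam hq hf ht
    _ = c ^ (q - 1) * ∫⁻ s in Ioi 0, f s ^ q * ENNReal.ofReal s ^ ((1 - lam) * (q - 1)) *
          ∫⁻ t in Ioi s, ENNReal.ofReal t ^ (-lam - 1) := by
        rw [lintegral_const_mul' _ _ (ENNReal.rpow_ne_top_of_nonneg (by linarith) hc),
          lintegral_Ioi_mul_lintegral_Ioo_comm 0 (by fun_prop) (by fun_prop)]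
    _ = c ^ (q - 1) *
          (c * ∫⁻ t in Ioi 0, (ENNReal.ofReal t ^ (1 - lam) * f t) ^ q / ENNReal.ofReal t) := by
        rw [← lintegral_const_mul' _ _ hc]
        congr 1
        exact setLIntegral_congr_fun measurableSet_Ioi fun s hs =>
          mul_lintegral_Ioi_ofReal_rpow hlam (by linarith) hs _
    _ = _ := by
        have hcq : c ^ (q - 1) * c = c ^ q := by
          simpa using (ENNReal.rpow_add (q - 1) 1 hc0 hc).symm
        rw [← mul_assoc, hcq]

/-- Hardy's inequality, second (dual) form. -/
theorem stmt1 (lam q : ℝ) (hlam : 0 < lam) (hq : 1 ≤ q)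
    (f : ℝ → ℝ≥0∞) (hf : Measurable f) :
    (∫⁻ t in Ioi (0 : ℝ),
        (ENNReal.ofReal t ^ (-lam) * ∫⁻ s in Ioo (0 : ℝ) t, f s) ^ q
          / ENNReal.ofReal t) ^ (1 / q)
      ≤ ENNReal.ofReal (1 / lam) *
        (∫⁻ t in Ioi (0 : ℝ),
          (ENNReal.ofReal t ^ (1 - lam) * f t) ^ q / ENNReal.ofReal t) ^ (1 / q) := by
  have hq0 : 0 < q := by linarith
  calc _ ≤ (ENNReal.ofReal (1 / lam) ^ q *
          ∫⁻ t in Ioi 0, (ENNReal.ofReal t ^ (1 - lam) * f t) ^ q / ENNReal.ofReal t) ^ (1 / q) :=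
        ENNReal.rpow_le_rpow (lintegral_Ioi_rpow_mul_lintegral_Ioo_le hlam hq hf) (by positivity)
    _ = _ := by
        rw [ENNReal.mul_rpow_of_nonneg _ _ (by positivity), ← ENNReal.rpow_mul,
          mul_one_div_cancel hq0.ne', ENNReal.rpow_one]
end

section
/- Let X₀, X₁ be Banach spaces continuously embedded in a common Hausdorff topological vector space, and let f ∈ X₀ + X₁ satisfy K(f,t) → 0 as t → 0 and K(f,t)/t → 0 as t → ∞, where K(f,t) = inf{‖f₀‖_{X₀} + t‖f₁‖_{X₁} : f = f₀ + f₁}. Then for every ε > 0 there exists a sequence (f_ν)_{ν∈ℤ} in X₀ ∩ X₁ with f = Σ_ν f_ν converging in X₀ + X₁ and max(‖f_ν‖_{X₀}, 2^ν ‖f_ν‖_{X₁}) ≤ 3(1+ε) K(f, 2^ν) for every ν ∈ ℤ. -/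
/-!
For each `ν : ℤ` pick a decomposition `f = i₀ (x₀ ν) + i₁ (x₁ ν)` that is `(1 + ε)`-optimal for
`K(f, 2 ^ ν)`; this is possible because `K(f, t) > 0` for `t > 0` unless `f = 0`. The element
`x₀ ν - x₀ (ν - 1) = x₁ (ν - 1) - x₁ ν` lies in `X₀ ∩ X₁`, and its `J(·, 2 ^ ν)` is at most
`3 (1 + ε) K(f, 2 ^ ν)` because `K(f, ·)` is monotone and `2 ^ ν = 2 · 2 ^ (ν - 1)`. The partial
sums over `[-N, N]` telescope to `f - i₀ (x₀ (-N - 1)) - i₁ (x₁ N)`, whose `K(·, 1)` is at most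
`(1 + ε) (K(f, 2 ^ (-N - 1)) + K(f, 2 ^ N) / 2 ^ N) → 0`.
-/

open Filter
open scoped Topology

theorem Finset.sum_Icc_neg_sub_pred {M : Type*} [AddCommGroup M] (g : ℤ → M) (N : ℕ) :
    ∑ ν ∈ Finset.Icc (-(N : ℤ)) N, (g ν - g (ν - 1)) = g N - g (-N - 1) := by
  induction N with
  | zero => simp
  | succ N ih =>
    rw [Nat.cast_succ, Finset.sum_Icc_succ_eq_add_endpoints, ih, add_sub_cancel_right, neg_add']
    abel

theorem tendsto_two_zpow_natCast_atTop :
    Tendsto (fun N : ℕ => (2 : ℝ) ^ (N : ℤ)) atTop atTop := by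
  simpa only [zpow_natCast] using tendsto_pow_atTop_atTop_of_one_lt one_lt_two

theorem tendsto_two_zpow_neg_natCast_sub_one :
    Tendsto (fun N : ℕ => (2 : ℝ) ^ (-(N : ℤ) - 1)) atTop (𝓝[>] 0) := by
  refine (tendsto_inv_atTop_nhdsGT_zero.comp
    (tendsto_two_zpow_natCast_atTop.comp (tendsto_add_atTop_nat 1))).congr fun N => ?_
  rw [Function.comp_apply, Function.comp_apply, ← neg_add', zpow_neg]
  norm_cast

theorem max_norm_sub_le_three_mul {X₀ X₁ : Type*} [SeminormedAddGroup X₀]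
    [SeminormedAddGroup X₁] {s t C : ℝ} (ht : 0 ≤ t) (hts : t ≤ 2 * s)
    {y₀ z₀ : X₀} {y₁ z₁ : X₁} (hy : ‖y₀‖ + s * ‖y₁‖ ≤ C) (hz : ‖z₀‖ + t * ‖z₁‖ ≤ C) :
    max ‖z₀ - y₀‖ (t * ‖y₁ - z₁‖) ≤ 3 * C := by
  have hs : 0 ≤ s := by linarith
  have hy₀ : ‖y₀‖ ≤ C := (le_add_of_nonneg_right (by positivity)).trans hy
  have hz₀ : ‖z₀‖ ≤ C := (le_add_of_nonneg_right (by positivity)).trans hz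
  have hz₁ : t * ‖z₁‖ ≤ C := (le_add_of_nonneg_left (norm_nonneg _)).trans hz
  have hy₁ : t * ‖y₁‖ ≤ 2 * C := calc
    t * ‖y₁‖ ≤ 2 * (s * ‖y₁‖) := by rw [← mul_assoc]; gcongr
    _ ≤ 2 * C := by linarith [norm_nonneg y₀]
  refine max_le ?_ ?_
  · linarith [norm_sub_le z₀ y₀, norm_nonneg z₀]
  · calc t * ‖y₁ - z₁‖ ≤ t * ‖y₁‖ + t * ‖z₁‖ := by rw [← mul_add]; gcongr; exact norm_sub_le _ _
      _ ≤ 3 * C := by linarith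

/-- As `sInf ∅ = 0`, this is `0` when `g ∉ i₀ X₀ + i₁ X₁`. -/
noncomputable def kFunctional {E X₀ X₁ : Type*} [Add E] [Norm X₀] [Norm X₁]
    (i₀ : X₀ → E) (i₁ : X₁ → E) (g : E) (t : ℝ) : ℝ :=
  sInf {r : ℝ | ∃ x₀ x₁, g = i₀ x₀ + i₁ x₁ ∧ r = ‖x₀‖ + t * ‖x₁‖}

section kFunctional

variable {E X₀ X₁ : Type*} [Add E] [SeminormedAddGroup X₀] [SeminormedAddGroup X₁]
  {i₀ : X₀ → E} {i₁ : X₁ → E} {g : E} {s t r : ℝ}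

theorem kFunctional_nonneg (ht : 0 ≤ t) : 0 ≤ kFunctional i₀ i₁ g t :=
  Real.sInf_nonneg <| by rintro _ ⟨x₀, x₁, -, rfl⟩; positivity

theorem kFunctional_le (ht : 0 ≤ t) {x₀ : X₀} {x₁ : X₁} (hg : g = i₀ x₀ + i₁ x₁) :
    kFunctional i₀ i₁ g t ≤ ‖x₀‖ + t * ‖x₁‖ :=
  csInf_le ⟨0, by rintro _ ⟨y₀, y₁, -, rfl⟩; positivity⟩ ⟨x₀, x₁, hg, rfl⟩

theorem exists_lt_of_kFunctional_lt (hg : ∃ x₀ x₁, g = i₀ x₀ + i₁ x₁)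
    (h : kFunctional i₀ i₁ g t < r) :
    ∃ x₀ x₁, g = i₀ x₀ + i₁ x₁ ∧ ‖x₀‖ + t * ‖x₁‖ < r := by
  obtain ⟨x₀, x₁, hx⟩ := hg
  obtain ⟨_, ⟨y₀, y₁, hy, rfl⟩, hlt⟩ :=
    exists_lt_of_csInf_lt (s := {r | ∃ x₀ x₁, g = i₀ x₀ + i₁ x₁ ∧ r = ‖x₀‖ + t * ‖x₁‖})
      ⟨_, x₀, x₁, hx, rfl⟩ h
  exact ⟨y₀, y₁, hy, hlt⟩

theorem kFunctional_mono (hg : ∃ x₀ x₁, g = i₀ x₀ + i₁ x₁) (hs : 0 ≤ s) (hst : s ≤ t) :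
    kFunctional i₀ i₁ g s ≤ kFunctional i₀ i₁ g t := by
  obtain ⟨x₀, x₁, hx⟩ := hg
  refine le_csInf ⟨_, x₀, x₁, hx, rfl⟩ ?_
  rintro _ ⟨y₀, y₁, hy, rfl⟩
  exact (kFunctional_le hs hy).trans (by gcongr)

variable [TopologicalSpace E] [ContinuousAdd E] [T2Space E]

theorem eq_of_kFunctional_eq_zero (hi₀ : Continuous i₀) (hi₁ : Continuous i₁)
    (hg : ∃ x₀ x₁, g = i₀ x₀ + i₁ x₁) (ht : 0 < t) (hK : kFunctional i₀ i₁ g t = 0) :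
    g = i₀ 0 + i₁ 0 := by
  choose x₀ x₁ hx hlt using fun n : ℕ =>
    exists_lt_of_kFunctional_lt hg (r := 1 / (n + 1)) (by rw [hK]; positivity)
  have hx₀ : Tendsto x₀ atTop (𝓝 0) :=
    squeeze_zero_norm (fun n => (le_add_of_nonneg_right (by positivity)).trans (hlt n).le)
      tendsto_one_div_add_atTop_nhds_zero_nat
  have hx₁ : Tendsto x₁ atTop (𝓝 0) := by
    refine squeeze_zero_norm (fun n => ?_) (by
      simpa only [zero_div] using tendsto_one_div_add_atTop_nhds_zero_nat.div_const t)
    rw [le_div_iff₀ ht, mul_comm]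
    exact (le_add_of_nonneg_left (norm_nonneg _)).trans (hlt n).le
  have hlim := ((hi₀.tendsto 0).comp hx₀).add ((hi₁.tendsto 0).comp hx₁)
  exact tendsto_nhds_unique (tendsto_const_nhds.congr hx) hlim

theorem exists_le_one_add_mul_kFunctional (hi₀ : Continuous i₀) (hi₁ : Continuous i₁)
    (hg : ∃ x₀ x₁, g = i₀ x₀ + i₁ x₁) (ht : 0 < t) {ε : ℝ} (hε : 0 < ε) :
    ∃ x₀ x₁, g = i₀ x₀ + i₁ x₁ ∧ ‖x₀‖ + t * ‖x₁‖ ≤ (1 + ε) * kFunctional i₀ i₁ g t := by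
  rcases (kFunctional_nonneg (i₀ := i₀) (i₁ := i₁) (g := g) ht.le).eq_or_lt with hK | hK
  · exact ⟨0, 0, eq_of_kFunctional_eq_zero hi₀ hi₁ hg ht hK.symm, by simp [← hK]⟩
  · obtain ⟨x₀, x₁, hx, hlt⟩ := exists_lt_of_kFunctional_lt hg (r := (1 + ε) * _)
      (lt_mul_of_one_lt_left hK (lt_add_of_pos_right 1 hε))
    exact ⟨x₀, x₁, hx, hlt.le⟩

end kFunctional

theorem tendsto_kFunctional_sub_sum_sub_pred {E X₀ X₁ F₀ : Type*} [AddCommGroup E]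
    [SeminormedAddGroup X₀] [SeminormedAddGroup X₁] [FunLike F₀ X₀ E]
    [AddMonoidHomClass F₀ X₀ E] (i₀ : F₀) (i₁ : X₁ → E) {f : E} {C : ℝ}
    {x₀ : ℤ → X₀} {x₁ : ℤ → X₁} (hx : ∀ ν, f = i₀ (x₀ ν) + i₁ (x₁ ν))
    (hxK : ∀ ν, ‖x₀ ν‖ + 2 ^ ν * ‖x₁ ν‖ ≤ C * kFunctional i₀ i₁ f (2 ^ ν))
    (h0 : Tendsto (kFunctional i₀ i₁ f) (𝓝[>] 0) (𝓝 0))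
    (hinf : Tendsto (fun t => kFunctional i₀ i₁ f t / t) atTop (𝓝 0)) :
    Tendsto (fun N : ℕ => kFunctional i₀ i₁
      (f - ∑ ν ∈ Finset.Icc (-(N : ℤ)) N, i₀ (x₀ ν - x₀ (ν - 1))) 1) atTop (𝓝 0) := by
  have hx₀ (m : ℤ) : ‖x₀ m‖ ≤ C * kFunctional i₀ i₁ f (2 ^ m) :=
    (le_add_of_nonneg_right (by positivity)).trans (hxK m)
  have hx₁ (m : ℤ) : ‖x₁ m‖ ≤ C * (kFunctional i₀ i₁ f (2 ^ m) / 2 ^ m) := by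
    rw [mul_div_assoc', le_div_iff₀ (by positivity), mul_comm]
    exact (le_add_of_nonneg_left (norm_nonneg _)).trans (hxK m)
  have hrem (N : ℕ) : f - ∑ ν ∈ Finset.Icc (-(N : ℤ)) N, i₀ (x₀ ν - x₀ (ν - 1)) =
      i₀ (x₀ (-N - 1)) + i₁ (x₁ N) := by
    simp_rw [map_sub]
    rw [Finset.sum_Icc_neg_sub_pred (fun ν => i₀ (x₀ ν)), hx N]
    abel
  have hbound (N : ℕ) : kFunctional i₀ i₁
      (f - ∑ ν ∈ Finset.Icc (-(N : ℤ)) N, i₀ (x₀ ν - x₀ (ν - 1))) 1 ≤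
      C * kFunctional i₀ i₁ f (2 ^ (-(N : ℤ) - 1)) +
        C * (kFunctional i₀ i₁ f (2 ^ (N : ℤ)) / 2 ^ (N : ℤ)) := by
    refine (kFunctional_le zero_le_one (hrem N)).trans ?_
    rw [one_mul]
    exact add_le_add (hx₀ _) (hx₁ _)
  refine squeeze_zero (fun N => kFunctional_nonneg zero_le_one) hbound ?_
  simpa using ((h0.comp tendsto_two_zpow_neg_natCast_sub_one).const_mul C).add
    ((hinf.comp tendsto_two_zpow_natCast_atTop).const_mul C)

theorem stmt2_general {E X₀ X₁ : Type*}
    [AddCommGroup E] [Module ℝ E] [TopologicalSpace E] [IsTopologicalAddGroup E]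
    [T2Space E]
    [NormedAddCommGroup X₀] [NormedSpace ℝ X₀]
    [NormedAddCommGroup X₁] [NormedSpace ℝ X₁]
    (i₀ : X₀ →L[ℝ] E) (i₁ : X₁ →L[ℝ] E)
    (K : E → ℝ → ℝ)
    (hK : ∀ g t, K g t =
      sInf {r : ℝ | ∃ x₀ x₁, g = i₀ x₀ + i₁ x₁ ∧ r = ‖x₀‖ + t * ‖x₁‖})
    (f : E) (hf : ∃ x₀ x₁, f = i₀ x₀ + i₁ x₁)
    (h0 : Tendsto (fun t => K f t) (𝓝[>] (0 : ℝ)) (𝓝 0))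
    (hinf : Tendsto (fun t => K f t / t) atTop (𝓝 0))
    (ε : ℝ) (hε : 0 < ε) :
    ∃ (a : ℤ → X₀) (b : ℤ → X₁),
      (∀ ν, i₀ (a ν) = i₁ (b ν)) ∧
      Tendsto (fun N : ℕ =>
          K (f - ∑ ν ∈ Finset.Icc (-(N : ℤ)) (N : ℤ), i₀ (a ν)) 1) atTop (𝓝 0) ∧
      ∀ ν : ℤ, max ‖a ν‖ ((2 : ℝ) ^ ν * ‖b ν‖) ≤ 3 * (1 + ε) * K f ((2 : ℝ) ^ ν) := by
  obtain rfl : K = kFunctional i₀ i₁ := funext₂ hK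
  choose x₀ x₁ hx hxK using fun ν : ℤ =>
    exists_le_one_add_mul_kFunctional i₀.continuous i₁.continuous hf (zpow_pos two_pos ν) hε
  refine ⟨fun ν => x₀ ν - x₀ (ν - 1), fun ν => x₁ (ν - 1) - x₁ ν, fun ν => ?_,
    tendsto_kFunctional_sub_sum_sub_pred i₀ i₁ hx hxK h0 hinf, fun ν => ?_⟩
  · rw [map_sub, map_sub, sub_eq_sub_iff_add_eq_add, ← hx ν, hx (ν - 1), add_comm]
  · have hmono : kFunctional i₀ i₁ f (2 ^ (ν - 1)) ≤ kFunctional i₀ i₁ f (2 ^ ν) :=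
      kFunctional_mono hf (by positivity) (zpow_le_zpow_right₀ one_le_two (by omega))
    have htwo : (2 : ℝ) ^ ν = 2 * 2 ^ (ν - 1) := by
      rw [← zpow_one_add₀ two_ne_zero, add_sub_cancel]
    rw [mul_assoc]
    exact max_norm_sub_le_three_mul (by positivity) htwo.le
      ((hxK (ν - 1)).trans (by gcongr)) (hxK ν)

/-- The fundamental lemma of interpolation theory. -/
theorem stmt2 {E X₀ X₁ : Type*}
    [AddCommGroup E] [Module ℝ E] [TopologicalSpace E] [IsTopologicalAddGroup E]
    [ContinuousSMul ℝ E] [T2Space E]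
    [NormedAddCommGroup X₀] [NormedSpace ℝ X₀] [CompleteSpace X₀]
    [NormedAddCommGroup X₁] [NormedSpace ℝ X₁] [CompleteSpace X₁]
    (i₀ : X₀ →L[ℝ] E) (i₁ : X₁ →L[ℝ] E)
    (hi₀ : Function.Injective i₀) (hi₁ : Function.Injective i₁)
    (K : E → ℝ → ℝ)
    (hK : ∀ g t, K g t =
      sInf {r : ℝ | ∃ x₀ x₁, g = i₀ x₀ + i₁ x₁ ∧ r = ‖x₀‖ + t * ‖x₁‖})
    (f : E) (hf : ∃ x₀ x₁, f = i₀ x₀ + i₁ x₁)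
    (h0 : Tendsto (fun t => K f t) (𝓝[>] (0 : ℝ)) (𝓝 0))
    (hinf : Tendsto (fun t => K f t / t) atTop (𝓝 0))
    (ε : ℝ) (hε : 0 < ε) :
    ∃ (a : ℤ → X₀) (b : ℤ → X₁),
      (∀ ν, i₀ (a ν) = i₁ (b ν)) ∧
      Tendsto (fun N : ℕ =>
          K (f - ∑ ν ∈ Finset.Icc (-(N : ℤ)) (N : ℤ), i₀ (a ν)) 1) atTop (𝓝 0) ∧
      ∀ ν : ℤ, max ‖a ν‖ ((2 : ℝ) ^ ν * ‖b ν‖) ≤ 3 * (1 + ε) * K f ((2 : ℝ) ^ ν) :=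
  stmt2_general i₀ i₁ K hK f hf h0 hinf ε hε
end

section
/- For every f ∈ L¹ + L^∞ on a measure space and every t > 0, K(f, t, L¹, L^∞) = ∫₀^t f*(s) ds, where K(f,t) = inf{‖f₀‖₁ + t‖f₁‖_∞ : f = f₀ + f₁} and f* is the non-increasing rearrangement of f. -/
/-!
Both sides equal `∫₀^∞ min(t, λ(u)) du`, where `λ(u) = μ{u < |f|}` is the distribution function
of `f`. For the rearrangement this is the layer-cake formula, because for `0 < s` one has
`u < f*(s) ↔ s < λ(u)`. For the K-functional: if `|f₁| ≤ M` a.e. then `λ(M + v) ≤ λ_{f₀}(v)`, so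
splitting the integral at `M` bounds it by `t M + ‖f₀‖₁`; truncating `f` at height `f*(t)`
produces a decomposition for which both pieces of the split are exact.
-/

open MeasureTheory Set
open scoped ENNReal

noncomputable section

variable {α : Type*} [MeasurableSpace α] {μ : Measure α} {f : α → ℝ}

def distribution (μ : Measure α) (f : α → ℝ) (u : ℝ) : ℝ≥0∞ :=
  μ {x | u < |f x|}

def rearrangement (μ : Measure α) (f : α → ℝ) (s : ℝ) : ℝ :=
  sInf {u : ℝ | 0 ≤ u ∧ distribution μ f u ≤ ENNReal.ofReal s}

def decompositionCosts (μ : Measure α) (f : α → ℝ) (t : ℝ) : Set ℝ :=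
  {r : ℝ | ∃ f₀ f₁ : α → ℝ, f = f₀ + f₁ ∧ MemLp f₀ 1 μ ∧ MemLp f₁ ∞ μ ∧
    r = (eLpNorm f₀ 1 μ).toReal + t * (eLpNorm f₁ ∞ μ).toReal}

def truncate (c x : ℝ) : ℝ :=
  max (-c) (min c x)

theorem abs_truncate_le {c : ℝ} (hc : 0 ≤ c) (x : ℝ) : |truncate c x| ≤ c :=
  abs_le.2 ⟨le_max_left _ _, max_le (by linarith) (min_le_left _ _)⟩

theorem abs_sub_truncate {c : ℝ} (hc : 0 ≤ c) (x : ℝ) : |x - truncate c x| = max (|x| - c) 0 := by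
  unfold truncate
  grind

theorem continuous_truncate (c : ℝ) : Continuous (truncate c) :=
  continuous_const.max (continuous_const.min continuous_id)

theorem setLIntegral_Ioi_zero_comp_const_add (g : ℝ → ℝ≥0∞) (c : ℝ) :
    ∫⁻ v in Ioi 0, g (c + v) = ∫⁻ u in Ioi c, g u := by
  rw [← lintegral_indicator measurableSet_Ioi, ← lintegral_indicator measurableSet_Ioi,
    ← lintegral_add_left_eq_self (indicator (Ioi c) g) c]
  congr 1 with v
  simp [indicator_apply]

theorem setLIntegral_Ioi_min_le (g : ℝ → ℝ≥0∞) (a : ℝ≥0∞) {c : ℝ} (hc : 0 ≤ c) :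
    ∫⁻ u in Ioi 0, min a (g u) ≤ a * ENNReal.ofReal c + ∫⁻ u in Ioi c, g u := by
  rw [← Ioc_union_Ioi_eq_Ioi hc, lintegral_union measurableSet_Ioi (Ioc_disjoint_Ioi le_rfl)]
  refine add_le_add ?_ (lintegral_mono fun u => min_le_right _ _)
  calc ∫⁻ u in Ioc 0 c, min a (g u) ≤ ∫⁻ _ in Ioc 0 c, a := lintegral_mono fun u => min_le_left _ _
    _ = a * ENNReal.ofReal c := by rw [setLIntegral_const, Real.volume_Ioc, sub_zero]

theorem setLIntegral_Ioi_min_eq {g : ℝ → ℝ≥0∞} {a : ℝ≥0∞} {c : ℝ} (hc : 0 ≤ c)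
    (hlow : ∀ u ∈ Ioo 0 c, a ≤ g u) (hhigh : ∀ u ∈ Ioi c, g u ≤ a) :
    ∫⁻ u in Ioi 0, min a (g u) = a * ENNReal.ofReal c + ∫⁻ u in Ioi c, g u := by
  rw [← Ioc_union_Ioi_eq_Ioi hc, lintegral_union measurableSet_Ioi (Ioc_disjoint_Ioi le_rfl),
    ← setLIntegral_congr Ioo_ae_eq_Ioc,
    setLIntegral_congr_fun measurableSet_Ioo fun u hu => min_eq_left (hlow u hu),
    setLIntegral_congr_fun measurableSet_Ioi fun u hu => min_eq_right (hhigh u hu),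
    setLIntegral_const, Real.volume_Ioo, sub_zero]

theorem volume_setOf_ofReal_lt_inter_Ioo (a : ℝ≥0∞) (t : ℝ) :
    volume ({s : ℝ | ENNReal.ofReal s < a} ∩ Ioo 0 t) = min (ENNReal.ofReal t) a := by
  rcases eq_or_ne a ∞ with rfl | ha
  · simp [Real.volume_Ioo]
  have hset : {s : ℝ | ENNReal.ofReal s < a} ∩ Ioo 0 t = Ioo 0 (min t a.toReal) := by
    ext s
    simp only [mem_inter_iff, mem_ofPred_eq, mem_Ioo, lt_min_iff]
    constructor
    · rintro ⟨hsa, hs, hst⟩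
      exact ⟨hs, hst, (ENNReal.ofReal_lt_iff_lt_toReal hs.le ha).1 hsa⟩
    · rintro ⟨hs, hst, hsa⟩
      exact ⟨(ENNReal.ofReal_lt_iff_lt_toReal hs.le ha).2 hsa, hs, hst⟩
  rw [hset, Real.volume_Ioo, sub_zero, ENNReal.ofReal_min, ENNReal.ofReal_toReal ha]

theorem toReal_add_ofReal_mul {a b : ℝ≥0∞} (ha : a ≠ ∞) (hb : b ≠ ∞) {t : ℝ} (ht : 0 ≤ t) :
    (a + ENNReal.ofReal t * b).toReal = a.toReal + t * b.toReal := by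
  rw [ENNReal.toReal_add ha (ENNReal.mul_ne_top ENNReal.ofReal_ne_top hb), ENNReal.toReal_mul,
    ENNReal.toReal_ofReal ht]

section Distribution

theorem distribution_antitone : Antitone (distribution μ f) :=
  fun _ _ huv => measure_mono fun _ hx => lt_of_le_of_lt huv hx

theorem distribution_le_of_forall_lt {c : ℝ} {b : ℝ≥0∞}
    (h : ∀ u, c < u → distribution μ f u ≤ b) : distribution μ f c ≤ b := by
  have hunion : {x | c < |f x|} = ⋃ n : ℕ, {x | c + 1 / ((n : ℝ) + 1) < |f x|} := by
    ext x
    simp only [mem_iUnion, mem_ofPred_eq]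
    constructor
    · intro hx
      obtain ⟨n, hn⟩ := exists_nat_one_div_lt (sub_pos.2 hx)
      exact ⟨n, by linarith⟩
    · rintro ⟨n, hn⟩
      linarith [Nat.one_div_pos_of_nat (α := ℝ) (n := n)]
  have hmono : Monotone fun n : ℕ => {x | c + 1 / ((n : ℝ) + 1) < |f x|} :=
    fun m n hmn => ofPred_subset_ofPred.2 fun x hx =>
      (show c + 1 / ((n : ℝ) + 1) ≤ c + 1 / ((m : ℝ) + 1) by gcongr).trans_lt hx
  rw [distribution, hunion, hmono.measure_iUnion]
  exact iSup_le fun n => h _ (lt_add_of_pos_right c Nat.one_div_pos_of_nat)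

theorem distribution_add_le_of_ae_abs_sub_le {g : α → ℝ} {M : ℝ}
    (h : ∀ᵐ x ∂μ, |f x - g x| ≤ M) (v : ℝ) :
    distribution μ f (M + v) ≤ distribution μ g v := by
  refine measure_mono_ae ?_
  filter_upwards [h] with x hx hfx
  have := abs_sub_abs_le_abs_sub (f x) (g x)
  show v < |g x|
  linarith [show M + v < |f x| from hfx]

theorem lintegral_enorm_eq_lintegral_distribution (hf : AEMeasurable f μ) :
    ∫⁻ x, ‖f x‖ₑ ∂μ = ∫⁻ u in Ioi 0, distribution μ f u := by
  simp_rw [Real.enorm_eq_ofReal_abs]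
  exact lintegral_eq_lintegral_meas_lt μ (ae_of_all _ fun x => abs_nonneg (f x)) hf.abs

theorem lintegral_min_distribution_le {f₀ f₁ : α → ℝ} (hsum : f = f₀ + f₁)
    (h₀ : AEMeasurable f₀ μ) (h₁ : MemLp f₁ ∞ μ) (a : ℝ≥0∞) :
    ∫⁻ u in Ioi 0, min a (distribution μ f u) ≤ eLpNorm f₀ 1 μ + a * eLpNorm f₁ ∞ μ := by
  set M := lpNorm f₁ ∞ μ with hM_def
  have hM : ∀ᵐ x ∂μ, |f x - f₀ x| ≤ M := by
    filter_upwards [ae_le_lpNorm_exponent_top h₁] with x hx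
    simpa [hsum] using hx
  calc ∫⁻ u in Ioi 0, min a (distribution μ f u)
      ≤ a * ENNReal.ofReal M + ∫⁻ u in Ioi M, distribution μ f u :=
        setLIntegral_Ioi_min_le _ _ lpNorm_nonneg
    _ = a * ENNReal.ofReal M + ∫⁻ v in Ioi 0, distribution μ f (M + v) := by
        rw [setLIntegral_Ioi_zero_comp_const_add]
    _ ≤ a * ENNReal.ofReal M + ∫⁻ v in Ioi 0, distribution μ f₀ v := by
        gcongr with v
        exact distribution_add_le_of_ae_abs_sub_le hM v
    _ = eLpNorm f₀ 1 μ + a * eLpNorm f₁ ∞ μ := by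
        rw [← lintegral_enorm_eq_lintegral_distribution h₀, ← eLpNorm_one_eq_lintegral_enorm,
          hM_def, ← toReal_eLpNorm h₁.1, ENNReal.ofReal_toReal h₁.2.ne, add_comm]

theorem lintegral_min_distribution_ne_top
    (hf : ∃ f₀ f₁ : α → ℝ, f = f₀ + f₁ ∧ MemLp f₀ 1 μ ∧ MemLp f₁ ∞ μ) {a : ℝ≥0∞} (ha : a ≠ ∞) :
    ∫⁻ u in Ioi 0, min a (distribution μ f u) ≠ ∞ := by
  obtain ⟨f₀, f₁, hsum, h₀, h₁⟩ := hf
  refine ne_top_of_le_ne_top ?_ (lintegral_min_distribution_le hsum h₀.1.aemeasurable h₁ a)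
  exact ENNReal.add_ne_top.2 ⟨h₀.2.ne, ENNReal.mul_ne_top ha h₁.2.ne⟩

theorem exists_distribution_le_of_lintegral_ne_top {s : ℝ} (hs : 0 < s)
    (h : ∫⁻ u in Ioi 0, min (ENNReal.ofReal s) (distribution μ f u) ≠ ∞) :
    ∃ u, 0 ≤ u ∧ distribution μ f u ≤ ENNReal.ofReal s := by
  by_contra! hlt
  rw [setLIntegral_congr_fun measurableSet_Ioi
    fun u hu => min_eq_left (hlt u (mem_Ioi.1 hu).le).le] at h
  simp [hs] at h

end Distribution

section Rearrangement

theorem rearrangement_nonneg (s : ℝ) : 0 ≤ rearrangement μ f s :=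
  Real.sInf_nonneg fun _ hu => hu.1

theorem rearrangement_le_of_distribution_le {s u : ℝ} (hu : 0 ≤ u)
    (h : distribution μ f u ≤ ENNReal.ofReal s) : rearrangement μ f s ≤ u :=
  csInf_le ⟨0, fun _ hv => hv.1⟩ ⟨hu, h⟩

theorem distribution_rearrangement_le {s : ℝ}
    (hs : ∃ u, 0 ≤ u ∧ distribution μ f u ≤ ENNReal.ofReal s) :
    distribution μ f (rearrangement μ f s) ≤ ENNReal.ofReal s := by
  refine distribution_le_of_forall_lt fun u hu => ?_
  obtain ⟨v, hv, hvu⟩ := exists_lt_of_csInf_lt hs hu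
  exact (distribution_antitone hvu.le).trans hv.2

theorem rearrangement_le_iff {s u : ℝ} (hs : ∃ u, 0 ≤ u ∧ distribution μ f u ≤ ENNReal.ofReal s)
    (hu : 0 ≤ u) : rearrangement μ f s ≤ u ↔ distribution μ f u ≤ ENNReal.ofReal s :=
  ⟨fun h => (distribution_antitone h).trans (distribution_rearrangement_le hs),
    rearrangement_le_of_distribution_le hu⟩

theorem antitoneOn_rearrangement
    (h : ∀ s, 0 < s → ∃ u, 0 ≤ u ∧ distribution μ f u ≤ ENNReal.ofReal s) :
    AntitoneOn (rearrangement μ f) (Ioi 0) := fun s₁ hs₁ _ _ hs =>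
  csInf_le_csInf ⟨0, fun _ hv => hv.1⟩ (h s₁ hs₁)
    fun _ hu => ⟨hu.1, hu.2.trans (ENNReal.ofReal_le_ofReal hs)⟩

theorem aemeasurable_rearrangement
    (h : ∀ s, 0 < s → ∃ u, 0 ≤ u ∧ distribution μ f u ≤ ENNReal.ofReal s) (t : ℝ) :
    AEMeasurable (rearrangement μ f) (volume.restrict (Ioo 0 t)) :=
  (aemeasurable_restrict_of_antitoneOn measurableSet_Ioi (antitoneOn_rearrangement h)).mono_measure
    (Measure.restrict_mono Ioo_subset_Ioi_self le_rfl)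

theorem lintegral_rearrangement
    (h : ∀ s, 0 < s → ∃ u, 0 ≤ u ∧ distribution μ f u ≤ ENNReal.ofReal s) (t : ℝ) :
    ∫⁻ s in Ioo 0 t, ENNReal.ofReal (rearrangement μ f s)
      = ∫⁻ u in Ioi 0, min (ENNReal.ofReal t) (distribution μ f u) := by
  rw [lintegral_eq_lintegral_meas_lt _ (ae_of_all _ rearrangement_nonneg)
    (aemeasurable_rearrangement h t)]
  refine setLIntegral_congr_fun measurableSet_Ioi fun u hu => ?_
  rw [Measure.restrict_apply' measurableSet_Ioo, ← volume_setOf_ofReal_lt_inter_Ioo]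
  congr 1 with s
  simp only [mem_inter_iff, mem_ofPred_eq, mem_Ioo, and_congr_left_iff]
  intro hs
  rw [← not_le, ← not_le, rearrangement_le_iff (h s hs.1) (le_of_lt hu)]

theorem lintegral_min_distribution_eq {t : ℝ}
    (ht : ∃ u, 0 ≤ u ∧ distribution μ f u ≤ ENNReal.ofReal t) :
    ∫⁻ u in Ioi 0, min (ENNReal.ofReal t) (distribution μ f u)
      = ENNReal.ofReal t * ENNReal.ofReal (rearrangement μ f t)
        + ∫⁻ u in Ioi (rearrangement μ f t), distribution μ f u :=
  setLIntegral_Ioi_min_eq (rearrangement_nonneg t)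
    (fun _ hu => le_of_lt (not_le.1 fun h => hu.2.not_ge ((rearrangement_le_iff ht hu.1.le).2 h)))
    (fun _ hu => (distribution_antitone (le_of_lt hu)).trans (distribution_rearrangement_le ht))

end Rearrangement

section Truncation

theorem distribution_sub_truncate {c u : ℝ} (hc : 0 ≤ c) (hu : 0 ≤ u) :
    distribution μ (fun x => f x - truncate c (f x)) u = distribution μ f (c + u) := by
  simp only [distribution, abs_sub_truncate hc, lt_max_iff, hu.not_gt, or_false]
  congr 1 with x
  simp only [mem_ofPred_eq]
  constructor <;> intro h <;> linarith

theorem eLpNorm_one_sub_truncate (hf : AEMeasurable f μ) {c : ℝ} (hc : 0 ≤ c) :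
    eLpNorm (fun x => f x - truncate c (f x)) 1 μ = ∫⁻ u in Ioi c, distribution μ f u := by
  have hm : AEMeasurable (fun x => f x - truncate c (f x)) μ :=
    hf.sub ((continuous_truncate c).measurable.comp_aemeasurable hf)
  rw [eLpNorm_one_eq_lintegral_enorm, lintegral_enorm_eq_lintegral_distribution hm,
    ← setLIntegral_Ioi_zero_comp_const_add (distribution μ f) c]
  exact setLIntegral_congr_fun measurableSet_Ioi fun u hu =>
    distribution_sub_truncate hc (mem_Ioi.1 hu).le

theorem eLpNorm_top_truncate_le {c : ℝ} (hc : 0 ≤ c) :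
    eLpNorm (fun x => truncate c (f x)) ∞ μ ≤ ENNReal.ofReal c := by
  rw [eLpNorm_exponent_top]
  exact eLpNormEssSup_le_of_ae_bound (ae_of_all _ fun x => abs_truncate_le hc (f x))

theorem memLp_top_truncate (hf : AEStronglyMeasurable f μ) {c : ℝ} (hc : 0 ≤ c) :
    MemLp (fun x => truncate c (f x)) ∞ μ :=
  memLp_top_of_bound ((continuous_truncate c).comp_aestronglyMeasurable hf) c
    (ae_of_all _ fun x => abs_truncate_le hc (f x))

end Truncation

theorem isLeast_decompositionCosts
    (hf : ∃ f₀ f₁ : α → ℝ, f = f₀ + f₁ ∧ MemLp f₀ 1 μ ∧ MemLp f₁ ∞ μ) {t : ℝ} (ht : 0 < t) :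
    IsLeast (decompositionCosts μ f t)
      (∫⁻ u in Ioi 0, min (ENNReal.ofReal t) (distribution μ f u)).toReal := by
  set I := ∫⁻ u in Ioi 0, min (ENNReal.ofReal t) (distribution μ f u)
  have hI : I ≠ ∞ := lintegral_min_distribution_ne_top hf ENNReal.ofReal_ne_top
  have lower : ∀ f₀ f₁ : α → ℝ, f = f₀ + f₁ → MemLp f₀ 1 μ → MemLp f₁ ∞ μ →
      I.toReal ≤ (eLpNorm f₀ 1 μ).toReal + t * (eLpNorm f₁ ∞ μ).toReal := by
    intro f₀ f₁ hsum h₀ h₁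
    rw [← toReal_add_ofReal_mul h₀.2.ne h₁.2.ne ht.le]
    exact ENNReal.toReal_mono (ENNReal.add_ne_top.2 ⟨h₀.2.ne,
      ENNReal.mul_ne_top ENNReal.ofReal_ne_top h₁.2.ne⟩)
      (lintegral_min_distribution_le hsum h₀.1.aemeasurable h₁ _)
  refine ⟨?_, fun r ⟨f₀, f₁, hsum, h₀, h₁, hr⟩ => hr ▸ lower f₀ f₁ hsum h₀ h₁⟩
  obtain ⟨g₀, g₁, hg, hg₀, hg₁⟩ := hf
  have hfm : AEStronglyMeasurable f μ := hg ▸ hg₀.1.add hg₁.1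
  set c := rearrangement μ f t
  have hc : 0 ≤ c := rearrangement_nonneg t
  have hcost : eLpNorm (fun x => f x - truncate c (f x)) 1 μ
      + ENNReal.ofReal t * ENNReal.ofReal c = I := by
    rw [eLpNorm_one_sub_truncate hfm.aemeasurable hc, add_comm]
    exact (lintegral_min_distribution_eq (exists_distribution_le_of_lintegral_ne_top ht hI)).symm
  have h₀ : MemLp (fun x => f x - truncate c (f x)) 1 μ :=
    ⟨hfm.sub ((continuous_truncate c).comp_aestronglyMeasurable hfm),
      lt_top_iff_ne_top.2 (ENNReal.add_ne_top.1 (hcost ▸ hI)).1⟩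
  have h₁ := memLp_top_truncate hfm hc
  have hsum : f = (fun x => f x - truncate c (f x)) + fun x => truncate c (f x) := by
    ext x; simp
  refine ⟨_, _, hsum, h₀, h₁, le_antisymm (lower _ _ hsum h₀ h₁) ?_⟩
  calc _ = (eLpNorm (fun x => f x - truncate c (f x)) 1 μ
          + ENNReal.ofReal t * eLpNorm (fun x => truncate c (f x)) ∞ μ).toReal :=
        (toReal_add_ofReal_mul h₀.2.ne h₁.2.ne ht.le).symm
    _ ≤ I.toReal := by
        rw [← hcost]
        exact ENNReal.toReal_mono (hcost ▸ hI) (by gcongr; exact eLpNorm_top_truncate_le hc)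

end

/-- The K-functional of the couple `(L¹, L∞)` equals the integral of the
non-increasing rearrangement: `K(f, t, L¹, L∞) = ∫₀^t f*(s) ds`. -/
theorem stmt3 {α : Type*} [MeasurableSpace α] (μ : Measure α) (f : α → ℝ)
    (hf : ∃ f₀ f₁ : α → ℝ, f = f₀ + f₁ ∧ MemLp f₀ 1 μ ∧ MemLp f₁ ∞ μ)
    (t : ℝ) (ht : 0 < t) :
    sInf {r : ℝ | ∃ f₀ f₁ : α → ℝ, f = f₀ + f₁ ∧ MemLp f₀ 1 μ ∧ MemLp f₁ ∞ μ ∧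
        r = (eLpNorm f₀ 1 μ).toReal + t * (eLpNorm f₁ ∞ μ).toReal}
      = ∫ s in Ioo (0 : ℝ) t,
          sInf {u : ℝ | 0 ≤ u ∧ μ {x | u < |f x|} ≤ ENNReal.ofReal s} := by
  have hne : ∀ s, 0 < s → ∃ u, 0 ≤ u ∧ distribution μ f u ≤ ENNReal.ofReal s := fun s hs =>
    exists_distribution_le_of_lintegral_ne_top hs
      (lintegral_min_distribution_ne_top hf ENNReal.ofReal_ne_top)
  change sInf (decompositionCosts μ f t) = ∫ s in Ioo 0 t, rearrangement μ f s
  rw [(isLeast_decompositionCosts hf ht).csInf_eq, integral_eq_lintegral_of_nonneg_ae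
    (ae_of_all _ rearrangement_nonneg) (aemeasurable_rearrangement hne t).aestronglyMeasurable,
    lintegral_rearrangement hne t]
end

section
/- Let T be a positive linear operator on L¹(Ω,μ) + L^∞(Ω,μ) that is simultaneously an L¹-contraction and an L^∞-contraction, let A_k f = (1/k)Σ_{j=0}^{k-1} T^j f and A* f = sup_{k≥1} A_k f. Then for every f ∈ L¹ and every λ > 0, λ · μ({A* f > λ}) ≤ ‖f‖₁. -/
/-!
Write `S_k g = ∑_{j<k} T^j g` and `M_N g = max_{0 ≤ k ≤ N} S_k g ≥ 0`. Since
`S_{k+1} g = g + T S_k g ≤ g + T M_N g` by positivity, `M_N g ≤ g + T M_N g` on `{M_N g > 0}`,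
so the `L¹`-contraction gives Hopf's maximal ergodic lemma
`∫_{M_N g > 0} g ≥ ∫ M_N g - ∫ T M_N g ≥ 0`.
Apply it to `g = f - λ 1_E`, where `E = {∃ k ≤ N, S_k f > λ k}`: the `L∞`-contraction gives
`S_k 1_E ≤ k`, so `S_k g > 0` on `E`, whence `E ⊆ {M_N g > 0}` and
`λ μ(E) ≤ ∫_{M_N g > 0} f ≤ ‖f‖₁`. Letting `N → ∞` gives the claim.
-/

open MeasureTheory Finset
open scoped ENNReal

namespace MaximalErgodic

variable {α : Type*} {T : Module.End ℝ (α → ℝ)}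

def partialSum (T : Module.End ℝ (α → ℝ)) (n : ℕ) : Module.End ℝ (α → ℝ) :=
  ∑ j ∈ range n, T ^ j

def maxPartialSum (T : Module.End ℝ (α → ℝ)) (N : ℕ) (g : α → ℝ) : α → ℝ :=
  (range (N + 1)).sup' nonempty_range_add_one fun k => partialSum T k g

theorem partialSum_apply (n : ℕ) (g : α → ℝ) (x : α) :
    partialSum T n g x = ∑ j ∈ range n, (T ^ j) g x := by
  simp only [partialSum, LinearMap.sum_apply, Finset.sum_apply]

theorem partialSum_succ (n : ℕ) : partialSum T (n + 1) = 1 + T * partialSum T n := by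
  simp only [partialSum, sum_range_succ', pow_zero, pow_succ', mul_sum, add_comm]

theorem pow_apply_le_one (hT : Monotone T) (hT1 : T 1 ≤ 1) (j : ℕ) {g : α → ℝ}
    (hg : g ≤ 1) : (T ^ j) g ≤ 1 := by
  induction j with
  | zero => exact hg
  | succ j ih => rw [pow_succ', Module.End.mul_apply]; exact (hT ih).trans hT1

theorem partialSum_apply_le (hT : Monotone T) (hT1 : T 1 ≤ 1) (n : ℕ) {g : α → ℝ}
    (hg : g ≤ 1) (x : α) : partialSum T n g x ≤ n := by
  rw [partialSum_apply]
  simpa using sum_le_card_nsmul (range n) _ 1 fun j _ => pow_apply_le_one hT hT1 j hg x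

theorem pos_of_mul_lt_partialSum {lam : ℝ} {k : ℕ} {g : α → ℝ} {x : α}
    (h : lam * k < partialSum T k g x) : 0 < k := by
  by_contra! hk
  simp [Nat.le_zero.1 hk, partialSum] at h

theorem partialSum_le_maxPartialSum {N k : ℕ} (hk : k ≤ N) (g : α → ℝ) :
    partialSum T k g ≤ maxPartialSum T N g :=
  le_sup' (fun k => partialSum T k g) (mem_range_succ_iff.2 hk)

theorem maxPartialSum_nonneg (N : ℕ) (g : α → ℝ) : 0 ≤ maxPartialSum T N g := by
  simpa [partialSum] using partialSum_le_maxPartialSum (T := T) N.zero_le g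

/-- Each `S_{k+1} g = g + T S_k g` is at most `g + T M_N g`, while `S_0 g = 0`. -/
theorem maxPartialSum_le (hT : Monotone T) (N : ℕ) (g : α → ℝ) (x : α) :
    maxPartialSum T N g x ≤ max 0 (g x + T (maxPartialSum T N g) x) := by
  refine (Finset.sup'_apply _ _ x).trans_le (sup'_le _ _ fun k hk => ?_)
  cases k with
  | zero => simp [partialSum]
  | succ k =>
    have hS : partialSum T k g ≤ maxPartialSum T N g :=
      partialSum_le_maxPartialSum (by simp at hk; omega) g
    rw [partialSum_succ]
    exact le_max_of_le_right (by simpa using hT hS x)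

theorem subset_setOf_maxPartialSum_pos (hT : Monotone T) (hT1 : T 1 ≤ 1) {lam : ℝ}
    (hlam : 0 ≤ lam) {N : ℕ} {f : α → ℝ} {E : Set α}
    (hEf : E ⊆ {x | ∃ k ≤ N, lam * k < partialSum T k f x}) :
    E ⊆ {x | 0 < maxPartialSum T N (f - lam • E.indicator 1) x} := fun x hx => by
  obtain ⟨k, hk, hlt⟩ := hEf hx
  have hind : partialSum T k (E.indicator 1) x ≤ k :=
    partialSum_apply_le hT hT1 k (Set.indicator_le_self' fun _ _ => zero_le_one) x
  refine lt_of_lt_of_le ?_ (partialSum_le_maxPartialSum hk _ x)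
  simp only [map_sub, map_smul, Pi.sub_apply, Pi.smul_apply, smul_eq_mul]
  linarith [mul_le_mul_of_nonneg_left hind hlam]

end MaximalErgodic

section

variable {α : Type*} [MeasurableSpace α] {μ : Measure α}

structure IsPositiveL1Contraction (μ : Measure α) (T : Module.End ℝ (α → ℝ)) : Prop where
  nonneg : ∀ g, 0 ≤ g → 0 ≤ T g
  integrable : ∀ g, Integrable g μ → Integrable (T g) μ
  integral_abs_le : ∀ g, Integrable g μ → ∫ x, |T g x| ∂μ ≤ ∫ x, |g x| ∂μ

namespace IsPositiveL1Contraction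

open MaximalErgodic

variable {T : Module.End ℝ (α → ℝ)}

theorem monotone (hT : IsPositiveL1Contraction μ T) : Monotone T := fun g h hgh => by
  simpa using hT.nonneg (h - g) (sub_nonneg.2 hgh)

theorem integral_le (hT : IsPositiveL1Contraction μ T) {g : α → ℝ} (hg₀ : 0 ≤ g)
    (hg : Integrable g μ) : ∫ x, T g x ∂μ ≤ ∫ x, g x ∂μ :=
  calc ∫ x, T g x ∂μ ≤ ∫ x, |T g x| ∂μ :=
        integral_mono (hT.integrable g hg) (hT.integrable g hg).abs fun x => le_abs_self _
    _ ≤ ∫ x, |g x| ∂μ := hT.integral_abs_le g hg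
    _ = ∫ x, g x ∂μ := by simp_rw [abs_of_nonneg (hg₀ _)]

theorem integrable_pow_apply (hT : IsPositiveL1Contraction μ T) (j : ℕ) {g : α → ℝ}
    (hg : Integrable g μ) : Integrable ((T ^ j) g) μ := by
  rw [Module.End.pow_apply]
  exact Function.Iterate.rec (Integrable · μ) hg hT.integrable j

theorem integrable_partialSum (hT : IsPositiveL1Contraction μ T) (n : ℕ) {g : α → ℝ}
    (hg : Integrable g μ) : Integrable (partialSum T n g) μ := by
  rw [partialSum, LinearMap.sum_apply]
  exact integrable_finsetSum' _ fun j _ => hT.integrable_pow_apply j hg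

theorem integrable_maxPartialSum (hT : IsPositiveL1Contraction μ T) (N : ℕ) {g : α → ℝ}
    (hg : Integrable g μ) : Integrable (maxPartialSum T N g) μ :=
  sup'_induction _ _ (p := (Integrable · μ)) (fun _ h₁ _ h₂ => h₁.sup h₂) fun k _ =>
    hT.integrable_partialSum k hg

theorem hopf_maximal_ergodic (hT : IsPositiveL1Contraction μ T) (N : ℕ) {g : α → ℝ}
    (hg : Integrable g μ) : 0 ≤ ∫ x in {x | 0 < maxPartialSum T N g x}, g x ∂μ := by
  set M := maxPartialSum T N g
  have hM₀ : 0 ≤ M := maxPartialSum_nonneg N g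
  have hM : Integrable M μ := hT.integrable_maxPartialSum N hg
  have hTM : Integrable (T M) μ := hT.integrable M hM
  have hA : NullMeasurableSet {x | 0 < M x} μ :=
    nullMeasurableSet_lt aemeasurable_const hM.aemeasurable
  calc 0 ≤ ∫ x, M x ∂μ - ∫ x, T M x ∂μ := sub_nonneg.2 (hT.integral_le hM₀ hM)
    _ ≤ ∫ x in {x | 0 < M x}, M x ∂μ - ∫ x in {x | 0 < M x}, T M x ∂μ := by
        gcongr ?_ - ?_
        · exact (setIntegral_eq_integral_of_forall_compl_eq_zero fun x hx =>
            le_antisymm (not_lt.1 hx) (hM₀ x)).ge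
        · exact setIntegral_le_integral hTM (.of_forall (hT.nonneg M hM₀))
    _ = ∫ x in {x | 0 < M x}, (M x - T M x) ∂μ :=
        (integral_sub hM.integrableOn hTM.integrableOn).symm
    _ ≤ ∫ x in {x | 0 < M x}, g x ∂μ := by
        refine setIntegral_mono_on₀ (hM.sub hTM).integrableOn hg.integrableOn hA fun x hx => ?_
        have := (le_max_iff.1 (maxPartialSum_le hT.monotone N g x)).resolve_left (not_le.2 hx)
        linarith

theorem measure_lt_top (hT : IsPositiveL1Contraction μ T) {f : α → ℝ} (hf : Integrable f μ)
    {lam : ℝ} (hlam : 0 < lam) (N : ℕ) :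
    μ {x | ∃ k ≤ N, lam * k < partialSum T k f x} < ∞ := by
  refine (measure_mono fun x hx => ?_).trans_lt
    ((hT.integrable_maxPartialSum N hf).measure_gt_lt_top hlam)
  obtain ⟨k, hk, hlt⟩ := hx
  have hk₀ : 1 ≤ (k : ℝ) := Nat.one_le_cast.2 (pos_of_mul_lt_partialSum hlt)
  calc lam ≤ lam * k := le_mul_of_one_le_right hlam.le hk₀
    _ < partialSum T k f x := hlt
    _ ≤ maxPartialSum T N f x := partialSum_le_maxPartialSum hk f x

theorem ofReal_mul_measure_le_of_subset (hT : IsPositiveL1Contraction μ T) (hT1 : T 1 ≤ 1)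
    {f : α → ℝ} (hf : Integrable f μ) {lam : ℝ} (hlam : 0 < lam) {N : ℕ} {E : Set α}
    (hE : MeasurableSet E) (hEf : E ⊆ {x | ∃ k ≤ N, lam * k < partialSum T k f x}) :
    ENNReal.ofReal lam * μ E ≤ ENNReal.ofReal (∫ x, |f x| ∂μ) := by
  have hμE : μ E ≠ ∞ := ((measure_mono hEf).trans_lt (hT.measure_lt_top hf hlam N)).ne
  have hI : Integrable (E.indicator 1) μ :=
    (integrableOn_const (C := (1 : ℝ)) hμE).integrable_indicator hE
  set g := f - lam • E.indicator 1
  have hg : Integrable g μ := hf.sub (hI.smul lam)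
  have hEA : E ⊆ {x | 0 < maxPartialSum T N g x} :=
    subset_setOf_maxPartialSum_pos hT.monotone hT1 hlam.le hEf
  have hind : ∫ x in {x | 0 < maxPartialSum T N g x}, E.indicator 1 x ∂μ = μ.real E := by
    rw [setIntegral_indicator hE, Set.inter_eq_right.2 hEA]
    simp
  have hfA : ∫ x in {x | 0 < maxPartialSum T N g x}, f x ∂μ ≤ ∫ x, |f x| ∂μ :=
    (le_abs_self _).trans <| (abs_integral_le_integral_abs).trans <|
      setIntegral_le_integral hf.abs (.of_forall fun x => abs_nonneg (f x))
  have hHopf := hT.hopf_maximal_ergodic N hg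
  simp only [g, Pi.sub_apply, Pi.smul_apply, smul_eq_mul] at hHopf
  rw [integral_sub hf.integrableOn (hI.const_mul lam).integrableOn, integral_const_mul, hind]
    at hHopf
  rw [← ofReal_measureReal hμE, ← ENNReal.ofReal_mul hlam.le]
  exact ENNReal.ofReal_le_ofReal (by linarith)

theorem ofReal_mul_measure_le (hT : IsPositiveL1Contraction μ T) (hT1 : T 1 ≤ 1)
    {f : α → ℝ} (hf : Integrable f μ) {lam : ℝ} (hlam : 0 < lam) (N : ℕ) :
    ENNReal.ofReal lam * μ {x | ∃ k ≤ N, lam * k < partialSum T k f x}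
      ≤ ENNReal.ofReal (∫ x, |f x| ∂μ) := by
  have hD : NullMeasurableSet {x | ∃ k ≤ N, lam * k < partialSum T k f x} μ := by
    simp only [Set.ofPred_exists]
    exact .iUnion fun k => (MeasurableSet.const (k ≤ N)).nullMeasurableSet.inter <|
      nullMeasurableSet_lt aemeasurable_const (hT.integrable_partialSum k hf).aemeasurable
  obtain ⟨E, hED, hE, hED_ae⟩ := hD.exists_measurable_subset_ae_eq
  rw [← measure_congr hED_ae]
  exact hT.ofReal_mul_measure_le_of_subset hT1 hf hlam hE hED

end IsPositiveL1Contraction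

end

open MaximalErgodic

theorem stmt10_general {α : Type*} [MeasurableSpace α] (μ : Measure α)
    (T : (α → ℝ) → (α → ℝ))
    (hadd : ∀ g h, T (g + h) = T g + T h)
    (hsmul : ∀ (c : ℝ) (g : α → ℝ), T (c • g) = c • T g)
    (hpos : ∀ g, (∀ x, 0 ≤ g x) → ∀ x, 0 ≤ T g x)
    (hL1 : ∀ g, Integrable g μ → Integrable (T g) μ ∧ ∫ x, |T g x| ∂μ ≤ ∫ x, |g x| ∂μ)
    (hLinf : ∀ (g : α → ℝ) (C : ℝ), (∀ x, |g x| ≤ C) → ∀ x, |T g x| ≤ C)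
    (f : α → ℝ) (hf : Integrable f μ)
    (lam : ℝ) (hlam : 0 < lam) :
    ENNReal.ofReal lam *
        μ {x | ∃ k : ℕ, 1 ≤ k ∧ lam < (∑ j ∈ Finset.range k, T^[j] f x) / k}
      ≤ ENNReal.ofReal (∫ x, |f x| ∂μ) := by
  let L : Module.End ℝ (α → ℝ) := ⟨⟨T, hadd⟩, hsmul⟩
  have hL : IsPositiveL1Contraction μ L :=
    ⟨hpos, fun g hg => (hL1 g hg).1, fun g hg => (hL1 g hg).2⟩
  have hL_one : L 1 ≤ 1 := fun x => (abs_le.1 (hLinf 1 1 (fun _ => by simp) x)).2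
  have hD : {x | ∃ k : ℕ, 1 ≤ k ∧ lam < (∑ j ∈ Finset.range k, T^[j] f x) / k}
      = ⋃ N, {x | ∃ k ≤ N, lam * k < partialSum L k f x} := by
    ext x
    simp only [Set.mem_ofPred_eq, Set.mem_iUnion, partialSum_apply, Module.End.pow_apply]
    constructor
    · rintro ⟨k, hk, hlt⟩
      exact ⟨k, k, le_rfl, by rwa [lt_div_iff₀ (by exact_mod_cast hk)] at hlt⟩
    · rintro ⟨-, k, -, hlt⟩
      have hk : 0 < k := Nat.pos_of_ne_zero (by rintro rfl; simp at hlt)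
      exact ⟨k, hk, by rwa [lt_div_iff₀ (by exact_mod_cast hk)]⟩
  have hmono : Monotone fun N => {x | ∃ k ≤ N, lam * k < partialSum L k f x} :=
    fun _ _ hNN' _ ⟨k, hk, hlt⟩ => ⟨k, hk.trans hNN', hlt⟩
  rw [hD, hmono.measure_iUnion, ENNReal.mul_iSup]
  exact iSup_le fun N => hL.ofReal_mul_measure_le hL_one hf hlam N

/-- The Dunford-Schwartz maximal ergodic inequality: for a positive linear
operator `T` which is both an `L¹`- and an `L∞`-contraction, the maximal
function `A* f = sup_{k ≥ 1} (1/k) ∑_{j<k} T^j f` of `f ∈ L¹` satisfies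
`λ μ({A* f > λ}) ≤ ‖f‖₁`. -/
theorem stmt10 {α : Type*} [MeasurableSpace α] (μ : Measure α)
    (T : (α → ℝ) → (α → ℝ))
    (hadd : ∀ g h, T (g + h) = T g + T h)
    (hsmul : ∀ (c : ℝ) (g : α → ℝ), T (c • g) = c • T g)
    (hmeas : ∀ g, Measurable g → Measurable (T g))
    (hpos : ∀ g, (∀ x, 0 ≤ g x) → ∀ x, 0 ≤ T g x)
    (hL1 : ∀ g, Integrable g μ → Integrable (T g) μ ∧ ∫ x, |T g x| ∂μ ≤ ∫ x, |g x| ∂μ)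
    (hLinf : ∀ (g : α → ℝ) (C : ℝ), (∀ x, |g x| ≤ C) → ∀ x, |T g x| ≤ C)
    (f : α → ℝ) (hfm : Measurable f) (hf : Integrable f μ)
    (lam : ℝ) (hlam : 0 < lam) :
    ENNReal.ofReal lam *
        μ {x | ∃ k : ℕ, 1 ≤ k ∧ lam < (∑ j ∈ Finset.range k, T^[j] f x) / k}
      ≤ ENNReal.ofReal (∫ x, |f x| ∂μ) :=
  stmt10_general μ T hadd hsmul hpos hL1 hLinf f hf lam hlam
end

section
/- Let 0 < α < 1 ≤ r < ∞ and let f : ℝ → ℝ be α-Hölder continuous and in L^r(ℝ). Then ‖f‖_∞ ≤ C(α,r) ‖f‖_r^{rα/(1+rα)} · [f]_{C^{0,α}}^{1/(1+rα)}, where [f]_{C^{0,α}} = sup_{x≠y} |f(x)-f(y)|/|x-y|^α. -/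
open MeasureTheory Set
open scoped ENNReal

/-! If `|f x| = M > 0`, Hölder continuity keeps `|f| ≥ M / 2` on an interval of length
`δ = (M / (2H))^(1/α)` starting at `x`, so Chebyshev's inequality gives `(M/2)^r δ ≤ ‖f‖_r^r`.
Raising this to the power `α` yields `(M/2)^(1+rα) ≤ ‖f‖_r^(rα) H`, which is the claim with `C = 2`.
When `H = 0` every `δ` is admissible, which forces `M = 0`. -/

section Holder

variable {f : ℝ → ℝ} {α H : ℝ}

lemma half_abs_le_abs_of_holder (hα : 0 < α) (hH : 0 ≤ H)
    (hf : ∀ x y : ℝ, |f x - f y| ≤ H * |x - y| ^ α) {x y δ : ℝ}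
    (hδ : H * δ ^ α ≤ |f x| / 2) (hy : |x - y| ≤ δ) : |f x| / 2 ≤ |f y| := by
  have hxy : H * |x - y| ^ α ≤ H * δ ^ α := by gcongr
  linarith [hf x y, abs_sub_abs_le_abs_sub (f x) (f y)]

lemma half_abs_rpow_mul_le_eLpNorm_rpow {r : ℝ} (hα : 0 < α) (hr : 0 < r) (hH : 0 ≤ H)
    (hf : ∀ x y : ℝ, |f x - f y| ≤ H * |x - y| ^ α) (hfr : MemLp f (ENNReal.ofReal r) volume)
    (x : ℝ) {δ : ℝ} (hδH : H * δ ^ α ≤ |f x| / 2) :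
    (|f x| / 2) ^ r * δ ≤ (eLpNorm f (ENNReal.ofReal r) volume).toReal ^ r := by
  have hp0 : ENNReal.ofReal r ≠ 0 := by simpa using hr
  have hpr : (ENNReal.ofReal r).toReal = r := ENNReal.toReal_ofReal hr.le
  have hsub : Icc x (x + δ) ⊆ {y | ENNReal.ofReal (|f x| / 2) ≤ ‖f y‖ₑ} := fun y hy => by
    have hxy : |x - y| ≤ δ := by rw [abs_sub_comm, abs_of_nonneg] <;> linarith [hy.1, hy.2]
    rw [mem_ofPred_eq, ← ofReal_norm, Real.norm_eq_abs]
    exact ENNReal.ofReal_le_ofReal (half_abs_le_abs_of_holder hα hH hf hδH hxy)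
  have hChebyshev := mul_meas_ge_le_pow_eLpNorm' volume hp0 ENNReal.ofReal_ne_top
    hfr.aestronglyMeasurable (ENNReal.ofReal (|f x| / 2))
  rw [hpr] at hChebyshev
  have hvol : ENNReal.ofReal δ ≤ volume {y | ENNReal.ofReal (|f x| / 2) ≤ ‖f y‖ₑ} := by
    simpa using measure_mono (μ := volume) hsub
  have h := (mul_le_mul_right hvol _).trans hChebyshev
  rw [ENNReal.ofReal_rpow_of_nonneg (by positivity) hr.le, ← ENNReal.ofReal_mul (by positivity),
    ← ENNReal.ofReal_toReal hfr.eLpNorm_ne_top, ENNReal.ofReal_rpow_of_nonneg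
    ENNReal.toReal_nonneg hr.le] at h
  exact (ENNReal.ofReal_le_ofReal_iff (by positivity)).mp h

end Holder

lemma le_two_mul_rpow_mul_rpow_of_half_rpow_mul_le {M N H r α : ℝ} (hα : 0 < α) (hr : 0 < r)
    (hM : 0 < M) (hN : 0 ≤ N) (hH : 0 < H)
    (h : (M / 2) ^ r * (M / (2 * H)) ^ (1 / α) ≤ N ^ r) :
    M ≤ 2 * N ^ (r * α / (1 + r * α)) * H ^ (1 / (1 + r * α)) := by
  have hM2 : 0 < M / 2 := by positivity
  have hs : 0 < 1 + r * α := by positivity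
  have hpow : (M / 2) ^ (1 + r * α) ≤ N ^ (r * α) * H := by
    have := Real.rpow_le_rpow (by positivity) h hα.le
    rw [Real.mul_rpow (by positivity) (by positivity), ← Real.rpow_mul hM2.le,
      ← Real.rpow_mul (by positivity), one_div_mul_cancel hα.ne', Real.rpow_one,
      ← Real.rpow_mul hN] at this
    rw [Real.rpow_add hM2, Real.rpow_one]
    calc M / 2 * (M / 2) ^ (r * α) = (M / 2) ^ (r * α) * (M / (2 * H)) * H := by
          field_simp
      _ ≤ N ^ (r * α) * H := by gcongr
  have hroot := Real.rpow_le_rpow (by positivity) hpow (one_div_pos.mpr hs).le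
  rw [← Real.rpow_mul hM2.le, mul_one_div_cancel hs.ne', Real.rpow_one,
    Real.mul_rpow (by positivity) hH.le, ← Real.rpow_mul hN, mul_one_div] at hroot
  linarith

theorem stmt17_general (α r : ℝ) (hα0 : 0 < α) (hr : 1 ≤ r) :
    ∃ C : ℝ, 0 < C ∧ ∀ (f : ℝ → ℝ) (H : ℝ), 0 ≤ H →
      (∀ x y : ℝ, |f x - f y| ≤ H * |x - y| ^ α) →
      MemLp f (ENNReal.ofReal r) volume →
      ∀ x : ℝ, |f x| ≤
        C * ((eLpNorm f (ENNReal.ofReal r) volume).toReal) ^ (r * α / (1 + r * α)) *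
          H ^ (1 / (1 + r * α)) := by
  refine ⟨2, two_pos, fun f H hH hf hfr x => ?_⟩
  have hr0 : 0 < r := by linarith
  set N := (eLpNorm f (ENNReal.ofReal r) volume).toReal
  rcases (abs_nonneg (f x)).eq_or_lt with hfx | hfx
  · rw [← hfx]; positivity
  rcases hH.eq_or_lt with rfl | hHpos
  · have hM : 0 < (|f x| / 2) ^ r := by positivity
    have h := half_abs_rpow_mul_le_eLpNorm_rpow hα0 hr0 le_rfl hf hfr x
      (δ := N ^ r / (|f x| / 2) ^ r + 1) (by rw [zero_mul]; positivity)
    rw [mul_add, mul_div_cancel₀ _ hM.ne', mul_one] at h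
    linarith
  · exact le_two_mul_rpow_mul_rpow_of_half_rpow_mul_le hα0 hr0 hfx ENNReal.toReal_nonneg hHpos
      (half_abs_rpow_mul_le_eLpNorm_rpow hα0 hr0 hH hf hfr x (by
        rw [← Real.rpow_mul (by positivity), one_div_mul_cancel hα0.ne', Real.rpow_one]
        exact (by field_simp : H * (|f x| / (2 * H)) = |f x| / 2).le))

/-- For `0 < α < 1 ≤ r < ∞` there is a constant `C(α,r)` such that every
`α`-Hölder continuous `f ∈ L^r(ℝ)` satisfies
`‖f‖_∞ ≤ C ‖f‖_r^{rα/(1+rα)} [f]_{C^{0,α}}^{1/(1+rα)}`. -/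
theorem stmt17 (α r : ℝ) (hα0 : 0 < α) (hα1 : α < 1) (hr : 1 ≤ r) :
    ∃ C : ℝ, 0 < C ∧ ∀ (f : ℝ → ℝ) (H : ℝ), 0 ≤ H →
      (∀ x y : ℝ, |f x - f y| ≤ H * |x - y| ^ α) →
      MemLp f (ENNReal.ofReal r) volume →
      ∀ x : ℝ, |f x| ≤
        C * ((eLpNorm f (ENNReal.ofReal r) volume).toReal) ^ (r * α / (1 + r * α)) *
          H ^ (1 / (1 + r * α)) :=
  stmt17_general α r hα0 hr
end

section
/- Let f be a measurable function on ℝⁿ and suppose there exist constants b > 0, B ≥ 0 such that for every cube Q ⊂ ℝⁿ there exists c_Q ∈ ℝ with |{x ∈ Q : |f(x) - c_Q| > s}| ≤ B e^{-bs} |Q| for all s > 0. Then f has bounded mean oscillation: sup_Q (1/|Q|)∫_Q |f - f_Q| ≤ 2B/b, where f_Q = (1/|Q|)∫_Q f. -/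
open MeasureTheory Set Metric

/-!
By the layer-cake formula, the exponential tail bound gives
`⨍_Q |f - c_Q| ≤ ∫₀^∞ B e^{-bs} ds = B / b`. Replacing `c_Q` by the mean `f_Q` at most doubles
the mean oscillation, because `|c_Q - f_Q| = |⨍_Q (c_Q - f)| ≤ ⨍_Q |f - c_Q|`.
-/

section ExponentialTail

variable {α : Type*} [MeasurableSpace α] {μ : Measure α} {g : α → ℝ} {b B : ℝ}

theorem lintegral_Ioi_ofReal_mul_exp_neg_mul (hb : 0 < b) (hB : 0 ≤ B) :
    ∫⁻ t in Ioi (0 : ℝ), ENNReal.ofReal (B * Real.exp (-(b * t))) = ENNReal.ofReal (B / b) := by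
  have hint : IntegrableOn (fun t : ℝ => B * Real.exp (-(b * t))) (Ioi 0) := by
    have := (exp_neg_integrableOn_Ioi 0 hb).const_mul B
    simp only [neg_mul] at this
    exact this
  have hval : ∫ t in Ioi (0 : ℝ), Real.exp (-(b * t)) = b⁻¹ := by
    simpa only [mul_zero, smul_eq_mul, integral_exp_neg_Ioi_zero, mul_one] using
      integral_comp_mul_left_Ioi (fun t => Real.exp (-t)) 0 hb
  rw [← ofReal_integral_eq_lintegral_ofReal hint (.of_forall fun t => by positivity),
    integral_const_mul, hval, div_eq_mul_inv]

-- Layer cake: `∫ g = ∫₀^∞ μ {g > t} dt`.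
theorem lintegral_ofReal_le_of_meas_lt_le_exp (hb : 0 < b) (hB : 0 ≤ B) (hg₀ : 0 ≤ g)
    (hg : AEMeasurable g μ) {C : ENNReal}
    (htail : ∀ t, 0 < t → μ {x | t < g x} ≤ ENNReal.ofReal (B * Real.exp (-(b * t))) * C) :
    ∫⁻ x, ENNReal.ofReal (g x) ∂μ ≤ ENNReal.ofReal (B / b) * C := by
  rw [lintegral_eq_lintegral_meas_lt μ (.of_forall hg₀) hg,
    ← lintegral_Ioi_ofReal_mul_exp_neg_mul hb hB, ← lintegral_mul_const _ (by fun_prop)]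
  exact setLIntegral_mono' measurableSet_Ioi htail

variable [IsFiniteMeasure μ]

theorem integrable_of_meas_lt_le_exp (hb : 0 < b) (hB : 0 ≤ B) (hg₀ : 0 ≤ g)
    (hg : AEMeasurable g μ)
    (htail : ∀ t, 0 < t → μ {x | t < g x} ≤ ENNReal.ofReal (B * Real.exp (-(b * t))) * μ univ) :
    Integrable g μ :=
  ⟨hg.aestronglyMeasurable, (hasFiniteIntegral_iff_ofReal (.of_forall hg₀)).2 <|
    (lintegral_ofReal_le_of_meas_lt_le_exp hb hB hg₀ hg htail).trans_lt <|
      ENNReal.mul_lt_top ENNReal.ofReal_lt_top (measure_lt_top μ univ)⟩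

theorem average_le_of_meas_lt_le_exp (hb : 0 < b) (hB : 0 ≤ B) (hg₀ : 0 ≤ g)
    (hg : AEMeasurable g μ)
    (htail : ∀ t, 0 < t → μ {x | t < g x} ≤ ENNReal.ofReal (B * Real.exp (-(b * t))) * μ univ) :
    ⨍ x, g x ∂μ ≤ B / b := by
  have hle : ENNReal.ofReal (⨍ x, g x ∂μ) ≤ ENNReal.ofReal (B / b) := by
    rw [ofReal_average (integrable_of_meas_lt_le_exp hb hB hg₀ hg htail) (.of_forall hg₀)]
    exact ENNReal.div_le_of_le_mul (lintegral_ofReal_le_of_meas_lt_le_exp hb hB hg₀ hg htail)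
  exact (ENNReal.ofReal_le_ofReal_iff (by positivity)).1 hle

end ExponentialTail

theorem average_abs_sub_average_le {α : Type*} [MeasurableSpace α] {μ : Measure α}
    [IsFiniteMeasure μ] {f : α → ℝ} (hf : Integrable f μ) (c : ℝ) :
    ⨍ x, |f x - ⨍ y, f y ∂μ| ∂μ ≤ 2 * ⨍ x, |f x - c| ∂μ := by
  set m := ⨍ y, f y ∂μ
  have hdev : Integrable (fun x => |f x - c|) μ := (hf.sub (integrable_const c)).abs
  have hm : μ.real univ * m = ∫ x, f x ∂μ := measure_smul_average μ f
  have hmean : μ.real univ * |c - m| ≤ ∫ x, |f x - c| ∂μ :=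
    calc μ.real univ * |c - m| = |∫ x, (c - f x) ∂μ| := by
          rw [integral_sub (integrable_const c) hf, integral_const, smul_eq_mul,
            ← hm, ← mul_sub, abs_mul,
            abs_of_nonneg measureReal_nonneg]
      _ ≤ ∫ x, |c - f x| ∂μ := abs_integral_le_integral_abs
      _ = ∫ x, |f x - c| ∂μ := by simp_rw [abs_sub_comm]
  have hint : ∫ x, |f x - m| ∂μ ≤ 2 * ∫ x, |f x - c| ∂μ :=
    calc ∫ x, |f x - m| ∂μ ≤ ∫ x, (|f x - c| + |c - m|) ∂μ :=
          integral_mono ((hf.sub (integrable_const m)).abs) (hdev.add (integrable_const _))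
            fun x => abs_sub_le _ _ _
      _ = ∫ x, |f x - c| ∂μ + μ.real univ * |c - m| := by
          rw [integral_add hdev (integrable_const _), integral_const, smul_eq_mul]
      _ ≤ 2 * ∫ x, |f x - c| ∂μ := by linarith
  rw [average_eq, average_eq, smul_eq_mul, smul_eq_mul, mul_left_comm]
  gcongr

/-- Converse John–Nirenberg: if for every cube `Q` (a sup-norm ball in `ℝⁿ`)
there is `c_Q` with `|{x ∈ Q : |f x - c_Q| > s}| ≤ B e^{-bs} |Q|` for all `s > 0`,
then `f` is of bounded mean oscillation with `sup_Q ⨍_Q |f - f_Q| ≤ 2B/b`. -/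
theorem stmt18 {n : ℕ} (f : (Fin n → ℝ) → ℝ) (hf : Measurable f)
    (b B : ℝ) (hb : 0 < b) (hB : 0 ≤ B)
    (h : ∀ (c : Fin n → ℝ) (r : ℝ), 0 < r → ∃ cQ : ℝ, ∀ s : ℝ, 0 < s →
      volume {x ∈ Metric.ball c r | s < |f x - cQ|}
        ≤ ENNReal.ofReal (B * Real.exp (-(b * s))) * volume (Metric.ball c r)) :
    ∀ (c : Fin n → ℝ) (r : ℝ), 0 < r →
      (⨍ x in Metric.ball c r, |f x - ⨍ y in Metric.ball c r, f y ∂volume| ∂volume)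
        ≤ 2 * B / b := by
  intro c r hr
  obtain ⟨cQ, hcQ⟩ := h c r hr
  have : IsFiniteMeasure (volume.restrict (ball c r)) :=
    isFiniteMeasure_restrict.2 measure_ball_lt_top.ne
  have hdev_meas : AEMeasurable (fun x => |f x - cQ|) (volume.restrict (ball c r)) :=
    (hf.sub measurable_const).abs.aemeasurable
  have htail : ∀ s, 0 < s → volume.restrict (ball c r) {x | s < |f x - cQ|}
      ≤ ENNReal.ofReal (B * Real.exp (-(b * s))) * volume.restrict (ball c r) univ := by
    intro s hs
    rw [Measure.restrict_apply' measurableSet_ball, Measure.restrict_apply_univ, inter_comm]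
    exact hcQ s hs
  have hint : Integrable f (volume.restrict (ball c r)) := by
    have hdev := integrable_of_meas_lt_le_exp hb hB (fun _ => abs_nonneg _) hdev_meas htail
    simpa using ((integrable_norm_iff (hf.sub measurable_const).aestronglyMeasurable).1 hdev).add
      (integrable_const cQ)
  calc _ ≤ 2 * ⨍ x in ball c r, |f x - cQ| := average_abs_sub_average_le hint cQ
    _ ≤ 2 * (B / b) := by
        gcongr
        exact average_le_of_meas_lt_le_exp hb hB (fun _ => abs_nonneg _) hdev_meas htail
    _ = 2 * B / b := by ring
end

section
/- For n ≥ 2 and nonnegative measurable f₁,…,f_n on ℝ^{n-1}, one has ∫_{ℝⁿ} ∏_{j=1}^n f_j(x₁,…,x̂_j,…,x_n) dx ≤ ∏_{j=1}^n ‖f_j‖_{L^{n-1}(ℝ^{n-1})}, where x̂_j denotes omission of the j-th coordinate. -/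
/-!
Induction on the dimension, the case of two variables being Fubini's theorem. For the inductive
step split off the first coordinate `t`. The factor `f 0` does not depend on `t`, so Hölder's
inequality with exponents `n + 1` and `(n + 1) / n` in the remaining variables, followed by the
inductive hypothesis applied to the `(n + 1) / n`-th powers of the slices `f (j + 1) (t, ·)`,
bounds the inner integral by `‖f 0‖ * ∏ ‖f (j + 1) (t, ·)‖`, all norms in `L^{n+1}`. The integral
over `t` of this product of `n + 1` functions is then controlled by the generalized Hölder
inequality with exponents `1 / (n + 1)`.
-/

open MeasureTheory
open scoped ENNReal

namespace MeasureTheory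

variable {α : Type*} [MeasurableSpace α] {μ : Measure α}

theorem lintegral_comp_const_eq_lintegral_pi_fin_one {g : (Fin 1 → α) → ℝ≥0∞}
    (hg : Measurable g) :
    ∫⁻ t, g (fun _ ↦ t) ∂μ = ∫⁻ y, g y ∂Measure.pi (fun _ ↦ μ) :=
  (measurePreserving_funUnique μ (Fin 1)).symm.lintegral_comp hg

@[fun_prop]
theorem _root_.Measurable.finCons {β : Type*} [MeasurableSpace β] {n : ℕ} {f : β → α}
    {g : β → Fin n → α} (hf : Measurable f) (hg : Measurable g) :
    Measurable fun b ↦ (Fin.cons (f b) (g b) : Fin (n + 1) → α) := by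
  rw [measurable_pi_iff]
  intro k
  cases k using Fin.cases with
  | zero => simpa
  | succ i => exact (measurable_pi_apply i).comp hg

variable (μ) in
def LoomisWhitney (n : ℕ) : Prop :=
  ∀ f : Fin (n + 1) → (Fin n → α) → ℝ≥0∞, (∀ j, Measurable (f j)) →
    ∫⁻ x, ∏ j, f j (x ∘ j.succAbove) ∂Measure.pi (fun _ ↦ μ)
      ≤ ∏ j, (∫⁻ y, f j y ^ (n : ℝ) ∂Measure.pi (fun _ ↦ μ)) ^ (1 / (n : ℝ))

theorem LoomisWhitney.lintegral_mul_prod_comp_succAbove_le {n : ℕ} (hn : 1 ≤ n)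
    (h : LoomisWhitney μ n) {F : (Fin (n + 1) → α) → ℝ≥0∞} (hF : Measurable F)
    {g : Fin (n + 1) → (Fin n → α) → ℝ≥0∞} (hg : ∀ j, Measurable (g j)) :
    ∫⁻ y, F y * ∏ j, g j (y ∘ j.succAbove) ∂Measure.pi (fun _ ↦ μ)
      ≤ (∫⁻ y, F y ^ (↑(n + 1) : ℝ) ∂Measure.pi (fun _ ↦ μ)) ^ (1 / (↑(n + 1) : ℝ))
        * ∏ j, (∫⁻ z, g j z ^ (↑(n + 1) : ℝ) ∂Measure.pi (fun _ ↦ μ)) ^ (1 / (↑(n + 1) : ℝ)) := by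
  set p : ℝ := ↑(n + 1)
  set q : ℝ := p / n
  have hn₀ : (0 : ℝ) < n := by exact_mod_cast hn
  have hp : p = n + 1 := Nat.cast_succ n
  have hpq : p.HolderConjugate q :=
    (Real.holderConjugate_iff_eq_conjExponent (by rw [hp]; linarith)).2 (by simp [q, hp])
  have hqn : q * n = p := div_mul_cancel₀ p hn₀.ne'
  have hq₀ : 0 ≤ q := hpq.symm.nonneg
  have hG : Measurable fun y : Fin (n + 1) → α ↦ ∏ j, g j (y ∘ j.succAbove) := by fun_prop
  calc ∫⁻ y, F y * ∏ j, g j (y ∘ j.succAbove) ∂Measure.pi (fun _ ↦ μ)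
      ≤ (∫⁻ y, F y ^ p ∂Measure.pi (fun _ ↦ μ)) ^ (1 / p)
        * (∫⁻ y, (∏ j, g j (y ∘ j.succAbove)) ^ q ∂Measure.pi (fun _ ↦ μ)) ^ (1 / q) :=
        ENNReal.lintegral_mul_le_Lp_mul_Lq _ hpq hF.aemeasurable hG.aemeasurable
    _ ≤ (∫⁻ y, F y ^ p ∂Measure.pi (fun _ ↦ μ)) ^ (1 / p)
        * (∏ j, (∫⁻ z, (g j z ^ q) ^ (n : ℝ) ∂Measure.pi (fun _ ↦ μ)) ^ (1 / (n : ℝ)))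
          ^ (1 / q) := by
        simp_rw [← ENNReal.prod_rpow_of_nonneg hq₀]
        gcongr
        exact h (fun j z ↦ g j z ^ q) fun j ↦ (hg j).pow_const q
    _ = (∫⁻ y, F y ^ p ∂Measure.pi (fun _ ↦ μ)) ^ (1 / p)
        * ∏ j, (∫⁻ z, g j z ^ p ∂Measure.pi (fun _ ↦ μ)) ^ (1 / p) := by
        simp_rw [← ENNReal.rpow_mul, hqn,
          ← ENNReal.prod_rpow_of_nonneg (by positivity : 0 ≤ 1 / q)]
        congr 2 with j
        rw [← ENNReal.rpow_mul, one_div_mul_one_div, mul_comm (n : ℝ), hqn]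

variable [SigmaFinite μ]

theorem lintegral_pi_fin_succ_eq_lintegral_cons {n : ℕ} {g : (Fin (n + 1) → α) → ℝ≥0∞}
    (hg : Measurable g) :
    ∫⁻ x, g x ∂Measure.pi (fun _ ↦ μ)
      = ∫⁻ t, ∫⁻ y, g (Fin.cons t y) ∂Measure.pi (fun _ ↦ μ) ∂μ := by
  have e := (measurePreserving_piFinSuccAbove (fun _ : Fin (n + 1) ↦ μ) 0).symm
  rw [← e.lintegral_comp hg, lintegral_prod (fun z ↦ g _) (hg.comp e.measurable).aemeasurable]
  simp [Fin.insertNthEquiv, Fin.insertNth_zero']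

theorem loomisWhitney_one : LoomisWhitney μ 1 := by
  intro f hf
  have hcomp (t : α) (y : Fin 1 → α) :
      (Fin.cons t y : Fin 2 → α) ∘ (1 : Fin 2).succAbove = fun _ ↦ t := by
    funext k; fin_cases k; rfl
  have hf₁ : Measurable fun t : α ↦ f 1 fun _ ↦ t := by fun_prop
  refine le_of_eq ?_
  calc ∫⁻ x, ∏ j, f j (x ∘ j.succAbove) ∂Measure.pi (fun _ ↦ μ)
      = ∫⁻ t, ∫⁻ y, f 0 y * f 1 (fun _ ↦ t) ∂Measure.pi (fun _ ↦ μ) ∂μ := by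
        rw [lintegral_pi_fin_succ_eq_lintegral_cons (by fun_prop)]
        refine lintegral_congr fun t ↦ lintegral_congr fun y ↦ ?_
        rw [Fin.prod_univ_two, hcomp]
        rfl
    _ = (∫⁻ y, f 0 y ∂Measure.pi (fun _ ↦ μ)) * ∫⁻ y, f 1 y ∂Measure.pi (fun _ ↦ μ) := by
        simp_rw [lintegral_mul_const _ (hf 0)]
        rw [lintegral_const_mul _ hf₁, lintegral_comp_const_eq_lintegral_pi_fin_one (hf 1)]
    _ = _ := by simp [Fin.prod_univ_two]

theorem LoomisWhitney.succ {n : ℕ} (hn : 1 ≤ n) (h : LoomisWhitney μ n) :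
    LoomisWhitney μ (n + 1) := by
  intro f hf
  set p : ℝ := ↑(n + 1)
  have hp₀ : 0 < p := by positivity
  set g : α → Fin (n + 1) → (Fin n → α) → ℝ≥0∞ := fun t j z ↦ f j.succ (Fin.cons t z)
  set G : Fin (n + 1) → α → ℝ≥0∞ := fun j t ↦ ∫⁻ z, g t j z ^ p ∂Measure.pi (fun _ ↦ μ)
  have hG : ∀ j, Measurable (G j) := fun j ↦ by fun_prop
  have hG_int : ∀ j, ∫⁻ t, G j t ∂μ = ∫⁻ y, f j.succ y ^ p ∂Measure.pi (fun _ ↦ μ) := fun j ↦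
    (lintegral_pi_fin_succ_eq_lintegral_cons (g := fun y ↦ f j.succ y ^ p) (by fun_prop)).symm
  calc ∫⁻ x, ∏ j, f j (x ∘ j.succAbove) ∂Measure.pi (fun _ ↦ μ)
      = ∫⁻ t, ∫⁻ y, f 0 y * ∏ j, g t j (y ∘ j.succAbove) ∂Measure.pi (fun _ ↦ μ) ∂μ := by
        rw [lintegral_pi_fin_succ_eq_lintegral_cons (by fun_prop)]
        refine lintegral_congr fun t ↦ lintegral_congr fun y ↦ ?_
        simp only [Fin.prod_univ_succ (n := n + 1), Fin.cons_comp_succ_succAbove]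
        rfl
    _ ≤ ∫⁻ t, (∫⁻ y, f 0 y ^ p ∂Measure.pi (fun _ ↦ μ)) ^ (1 / p) * ∏ j, G j t ^ (1 / p) ∂μ :=
        lintegral_mono fun t ↦ h.lintegral_mul_prod_comp_succAbove_le hn (hf 0)
          fun j ↦ (hf j.succ).comp (measurable_const.finCons measurable_id)
    _ = (∫⁻ y, f 0 y ^ p ∂Measure.pi (fun _ ↦ μ)) ^ (1 / p) * ∫⁻ t, ∏ j, G j t ^ (1 / p) ∂μ :=
        lintegral_const_mul _ (by fun_prop)
    _ ≤ (∫⁻ y, f 0 y ^ p ∂Measure.pi (fun _ ↦ μ)) ^ (1 / p) * ∏ j, (∫⁻ t, G j t ∂μ) ^ (1 / p) := by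
        gcongr
        refine ENNReal.lintegral_prod_norm_pow_le _ (fun j _ ↦ (hG j).aemeasurable) ?_
          fun _ _ ↦ by positivity
        rw [Finset.sum_const, Finset.card_univ, Fintype.card_fin, nsmul_eq_mul,
          mul_one_div_cancel hp₀.ne']
    _ = ∏ j, (∫⁻ y, f j y ^ p ∂Measure.pi (fun _ ↦ μ)) ^ (1 / p) := by
        simp_rw [hG_int, Fin.prod_univ_succ (n := n + 1)]

theorem loomisWhitney {n : ℕ} (hn : 1 ≤ n) : LoomisWhitney μ n :=
  Nat.le_induction loomisWhitney_one (fun _ hn h ↦ h.succ hn) n hn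

end MeasureTheory

/-- The Loomis–Whitney inequality in `ℝ^{n+1}` (with `n + 1 ≥ 2`):
`∫ ∏_j f_j(x with j-th coordinate omitted) ≤ ∏_j ‖f_j‖_{L^n(ℝⁿ)}`. -/
theorem stmt19 (n : ℕ) (hn : 1 ≤ n)
    (f : Fin (n + 1) → ((Fin n → ℝ) → ℝ≥0∞)) (hf : ∀ j, Measurable (f j)) :
    ∫⁻ x : Fin (n + 1) → ℝ, ∏ j, f j (x ∘ j.succAbove)
      ≤ ∏ j, (∫⁻ y : Fin n → ℝ, f j y ^ (n : ℝ)) ^ (1 / (n : ℝ)) :=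
  loomisWhitney (μ := volume) hn f hf
end
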